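/- arXiv:2003.05195 — 9 statements merged into one kernel-verified Lean document; each statement's English description precedes it below -/
import Mathlib

section
/- For every α ≥ 0, the range H_α = Q^α(X) is a Borel subset of X. -/
/-!
Context: `X` real separable Hilbert space, `Q` bounded self-adjoint strictly positive
compact trace-class, diagonalized by a Hilbert basis `e` with strictly positive summable
eigenvalues `q`; `Q^α` (continuous functional calculus of `λ ↦ λ^α`) is the unique
bounded operator `Qα` with `Qα (e i) = (q i)^α • e i`.

STATEMENT 2: for every `α ≥ 0`, the range `H_α = Q^α(X)` is a Borel subset of `X`.
-/

open scoped RealInnerProductSpace ENNReal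

noncomputable section

theorem stmt_2
    {X : Type*} [NormedAddCommGroup X] [InnerProductSpace ℝ X] [CompleteSpace X]
    [TopologicalSpace.SeparableSpace X] [MeasurableSpace X] [BorelSpace X]
    {ι : Type*} (e : HilbertBasis ι ℝ X) (q : ι → ℝ) (Q : X →L[ℝ] X)
    (hq : ∀ i, 0 < q i)
    (hdiag : ∀ i, Q (e i) = q i • e i)
    (hsa : IsSelfAdjoint Q)
    (hpos : ∀ x : X, x ≠ 0 → 0 < ⟪Q x, x⟫)
    (hcomp : IsCompactOperator Q)
    (htrace : Summable fun i => ⟪Q (e i), e i⟫)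
    {α : ℝ} (hα : 0 ≤ α)
    (Qα : X →L[ℝ] X) (hQα : ∀ i, Qα (e i) = (q i) ^ α • e i) :
    MeasurableSet (Set.range ⇑Qα) := by
  -- coefficient identity: ⟪e i, Qα x⟫ = (q i)^α * ⟪e i, x⟫
  have hcoef : ∀ i x, ⟪e i, Qα x⟫ = (q i) ^ α * ⟪e i, x⟫ := by
    intro i x
    have : (innerSL ℝ (e i)).comp Qα = (q i) ^ α • innerSL ℝ (e i) := by
      have hd : Dense ((Submodule.span ℝ (Set.range ⇑e)) : Set X) := by
        rw [Submodule.dense_iff_topologicalClosure_eq_top]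
        exact e.dense_span
      refine ContinuousLinearMap.ext_on hd ?_
      classical
      rintro _ ⟨j, rfl⟩
      have horth := e.orthonormal
      rw [orthonormal_iff_ite] at horth
      simp only [ContinuousLinearMap.comp_apply, ContinuousLinearMap.smul_apply,
        innerSL_apply_apply, hQα j, inner_smul_right, horth i j, smul_eq_mul]
      split_ifs with hij
      · subst hij; ring
      · ring
    have := congrArg (fun L : X →L[ℝ] ℝ => L x) this
    simpa using this
  have hinj : Function.Injective ⇑Qα := by
    rw [← ContinuousLinearMap.coe_coe, injective_iff_map_eq_zero]
    intro x hx
    have hx' : ∀ i, ⟪e i, x⟫ = 0 := by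
      intro i
      have h1 := hcoef i x
      rw [show Qα x = 0 from hx, inner_zero_right] at h1
      have hqpos : (0:ℝ) < (q i) ^ α := Real.rpow_pos_of_pos (hq i) α
      exact (mul_eq_zero.mp h1.symm).resolve_left (ne_of_gt hqpos)
    apply e.repr.injective
    ext i
    rw [e.repr_apply_apply, hx' i]
    simp
  exact (Qα.continuous.measurableEmbedding hinj).measurableSet_range
end
end

section
/- Let α ∈ [0,1/2) and t ≥ 0. Then e^{tA} maps H_α into H_α and its restriction to H_α is a contraction for the norm ‖·‖_α: for every h ∈ H_α one has e^{tA}h ∈ H_α and ‖Q^{-α}(e^{tA}h)‖ ≤ ‖Q^{-α}h‖. -/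
open scoped RealInnerProductSpace ENNReal

noncomputable section

theorem stmt_4
    {X : Type*} [NormedAddCommGroup X] [InnerProductSpace ℝ X] [CompleteSpace X]
    [TopologicalSpace.SeparableSpace X]
    {ι : Type*} (e : HilbertBasis ι ℝ X) (q : ι → ℝ) (Q : X →L[ℝ] X)
    (hq : ∀ i, 0 < q i)
    (hdiag : ∀ i, Q (e i) = q i • e i)
    (hsa : IsSelfAdjoint Q)
    (hpos : ∀ x : X, x ≠ 0 → 0 < ⟪Q x, x⟫)
    (hcomp : IsCompactOperator Q)
    (htrace : Summable fun i => ⟪Q (e i), e i⟫)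
    {α : ℝ} (hα : α ∈ Set.Ico (0 : ℝ) (1/2))
    (Qα : X →L[ℝ] X) (hQα : ∀ i, Qα (e i) = (q i) ^ α • e i)
    (hinj : Function.Injective Qα)
    (S : ℝ → X →L[ℝ] X)
    (hS0 : S 0 = ContinuousLinearMap.id ℝ X)
    (hSdiag : ∀ t > (0 : ℝ), ∀ i,
      S t (e i) = Real.exp (-(t/2) * (q i) ^ (2*α - 1)) • e i)
    {t : ℝ} (ht : 0 ≤ t) :
    ∀ u : X, ∃ v : X, Qα v = S t (Qα u) ∧ ‖v‖ ≤ ‖u‖ := by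
  intro u
  rcases eq_or_lt_of_le ht with h0 | htpos
  · exact ⟨u, by rw [← h0, hS0]; rfl, le_refl _⟩
  -- t > 0 case
  set lam : ι → ℝ := fun i => Real.exp (-(t/2) * (q i) ^ (2*α - 1)) with hlam
  have hlam_pos : ∀ i, 0 < lam i := fun i => Real.exp_pos _
  have hlam_le : ∀ i, lam i ≤ 1 := by
    intro i
    rw [hlam]
    rw [Real.exp_le_one_iff]
    apply mul_nonpos_of_nonpos_of_nonneg
    · linarith
    · exact (Real.rpow_pos_of_pos (hq i) _).le
  refine ⟨S t u, ?_, ?_⟩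
  · -- Qα (S t u) = S t (Qα u) via HasSum uniqueness
    have h1 : HasSum (fun i => e.repr u i • e i) u := e.hasSum_repr u
    have h2 : HasSum (fun i => (Qα.comp (S t)) (e.repr u i • e i)) (Qα (S t u)) :=
      h1.mapL (Qα.comp (S t))
    have h3 : HasSum (fun i => ((S t).comp Qα) (e.repr u i • e i)) (S t (Qα u)) :=
      h1.mapL ((S t).comp Qα)
    have hkey : (fun i => (Qα.comp (S t)) (e.repr u i • e i))
        = fun i => ((S t).comp Qα) (e.repr u i • e i) := by
      funext i
      simp only [ContinuousLinearMap.comp_apply, map_smul]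
      rw [hSdiag t htpos i, hQα i, map_smul, map_smul, hQα i, hSdiag t htpos i,
        smul_smul, smul_smul, smul_smul, smul_smul, mul_comm]
      ring_nf
    rw [hkey] at h2
    exact h2.unique h3
  · -- norm bound
    set c : ι → ℝ := fun i => lam i * e.repr u i with hc
    have hru : Memℓp (fun i => e.repr u i) 2 := lp.memℓp (e.repr u)
    have hsum2 : Summable (fun i => ‖e.repr u i‖ ^ ((2:ℝ≥0∞).toReal)) :=
      hru.summable (by norm_num)
    have hle : ∀ i, ‖c i‖ ^ ((2:ℝ≥0∞).toReal) ≤ ‖e.repr u i‖ ^ ((2:ℝ≥0∞).toReal) := by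
      intro i
      apply Real.rpow_le_rpow (norm_nonneg _) _ (by norm_num)
      rw [hc]
      simp only [Real.norm_eq_abs, abs_mul]
      calc |lam i| * |e.repr u i| ≤ 1 * |e.repr u i| := by
            apply mul_le_mul_of_nonneg_right _ (abs_nonneg _)
            rw [abs_of_pos (hlam_pos i)]; exact hlam_le i
        _ = |e.repr u i| := one_mul _
    have hmem : Memℓp c 2 := by
      apply memℓp_gen
      exact Summable.of_nonneg_of_le
        (fun i => Real.rpow_nonneg (norm_nonneg _) _) hle hsum2
    set f : lp (fun _ : ι => ℝ) 2 := ⟨c, hmem⟩ with hf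
    have hSu : S t u = e.repr.symm f := by
      have h1 : HasSum (fun i => e.repr u i • e i) u := e.hasSum_repr u
      have h2 : HasSum (fun i => (S t) (e.repr u i • e i)) (S t u) := h1.mapL (S t)
      have h3 : HasSum (fun i => f i • e i) (e.repr.symm f) := e.hasSum_repr_symm f
      have hkey : (fun i => (S t) (e.repr u i • e i)) = fun i => f i • e i := by
        funext i
        rw [map_smul, hSdiag t htpos i]
        show e.repr u i • lam i • e i = c i • e i
        rw [smul_smul, hc, mul_comm]
      rw [hkey] at h2
      exact h2.unique h3
    rw [hSu, LinearIsometryEquiv.norm_map]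
    have hnu : ‖u‖ = ‖e.repr u‖ := (e.repr.norm_map u).symm
    rw [hnu]
    apply lp.norm_le_of_tsum_le (by norm_num : 0 < (2:ℝ≥0∞).toReal) (norm_nonneg _)
    calc ∑' i, ‖f i‖ ^ ((2:ℝ≥0∞).toReal)
        ≤ ∑' i, ‖e.repr u i‖ ^ ((2:ℝ≥0∞).toReal) := by
          apply Summable.tsum_le_tsum hle _ hsum2
          exact hmem.summable (by norm_num)
      _ = ‖e.repr u‖ ^ ((2:ℝ≥0∞).toReal) :=
          (lp.norm_rpow_eq_tsum (by norm_num) (e.repr u)).symm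
end
end

section
/- Let α ∈ [0,1/2), γ > 0 and t > 0. Then e^{tA}(X) ⊆ Q^γ(X), and for every x ∈ X the unique preimage satisfies the smoothing estimate ‖Q^{-γ}(e^{tA}x)‖ ≤ (2γ/(e(1−2α)))^{γ/(1−2α)} · t^{−γ/(1−2α)} · ‖x‖, where e denotes Euler's number. -/
/-!
Context: `X` real separable Hilbert space, `Q` bounded self-adjoint strictly positive
compact trace-class, diagonalized by a Hilbert basis `e` with strictly positive summable
eigenvalues `q`; `Q^γ` is the unique bounded operator `Qγ` with
`Qγ (e i) = (q i)^γ • e i`; it is injective (`hinjγ`), so every element of its range has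
a unique preimage `Q^{-γ}h`.  For `α ∈ [0,1/2)`, `e^{tA}` is the unique family `S` with
`S 0 = Id` and `S t (e i) = exp(−(t/2)(q i)^{2α−1}) • e i` for `t > 0`.

STATEMENT 5: for `γ > 0` and `t > 0`, `e^{tA}(X) ⊆ Q^γ(X)` and for every `x ∈ X` the
(unique, by `hinjγ`) preimage `v = Q^{-γ}(e^{tA}x)` satisfies
`‖v‖ ≤ (2γ/(e(1−2α)))^{γ/(1−2α)} · t^{−γ/(1−2α)} · ‖x‖`.
-/

open scoped RealInnerProductSpace ENNReal

noncomputable section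

lemma aux_smax {β s : ℝ} (hβ : 0 < β) (hs : 0 < s) :
    s ^ β * Real.exp (-s) ≤ β ^ β * Real.exp (-β) := by
  rw [Real.rpow_def_of_pos hs, Real.rpow_def_of_pos hβ, ← Real.exp_add, ← Real.exp_add]
  apply Real.exp_le_exp.2
  have h := Real.log_le_sub_one_of_pos (div_pos hs hβ)
  rw [Real.log_div hs.ne' hβ.ne'] at h
  have h1 : (Real.log s - Real.log β) * β ≤ (s / β - 1) * β :=
    mul_le_mul_of_nonneg_right h hβ.le
  rw [sub_mul, sub_mul, div_mul_cancel₀ _ hβ.ne'] at h1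
  linarith

lemma aux_key {α γ t : ℝ} (hα : α ∈ Set.Ico (0 : ℝ) (1/2)) (hγ : 0 < γ) (ht : 0 < t)
    {l : ℝ} (hl : 0 < l) :
    Real.exp (-(t/2) * l ^ (2*α - 1)) * l ^ (-γ)
      ≤ (2*γ/(Real.exp 1 * (1 - 2*α))) ^ (γ/(1 - 2*α)) * t ^ (-(γ/(1 - 2*α))) := by
  have h2α : 0 < 1 - 2*α := by have := hα.2; linarith
  set β := γ/(1 - 2*α) with hβdef
  have hβ : 0 < β := div_pos hγ h2α
  set s := (t/2) * l ^ (2*α - 1) with hsdef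
  have hls : 0 < l ^ (2*α - 1) := Real.rpow_pos_of_pos hl _
  have hs : 0 < s := mul_pos (by linarith) hls
  have e1pos : (0:ℝ) < Real.exp 1 := Real.exp_pos 1
  have hexp : (2*α - 1) * β = -γ := by
    rw [hβdef]; field_simp; ring
  have hts : l ^ (2*α - 1) = (2/t) * s := by
    rw [hsdef]; field_simp
  have h1 : l ^ (-γ) = (2/t) ^ β * s ^ β := by
    rw [← hexp, Real.rpow_mul hl.le, hts, Real.mul_rpow (by positivity) hs.le]
  have h2 : (0:ℝ) ≤ (2/t) ^ β := by positivity
  have hmain : Real.exp (-s) * l ^ (-γ) ≤ (2/t) ^ β * (β ^ β * Real.exp (-β)) := by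
    rw [h1]
    calc Real.exp (-s) * ((2/t) ^ β * s ^ β)
        = (2/t) ^ β * (s ^ β * Real.exp (-s)) := by ring
      _ ≤ (2/t) ^ β * (β ^ β * Real.exp (-β)) :=
          mul_le_mul_of_nonneg_left (aux_smax hβ hs) h2
  have hre : (2/t) ^ β * (β ^ β * Real.exp (-β))
      = (2*γ/(Real.exp 1 * (1 - 2*α))) ^ β * t ^ (-β) := by
    rw [Real.exp_neg, ← Real.exp_one_rpow β, ← Real.inv_rpow e1pos.le,
        Real.rpow_neg ht.le, ← Real.inv_rpow ht.le,
        ← Real.mul_rpow hβ.le (by positivity),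
        ← Real.mul_rpow (by positivity : (0:ℝ) ≤ 2/t) (by positivity),
        ← Real.mul_rpow (le_of_lt (div_pos (by linarith) (by positivity))) (by positivity)]
    congr 1
    rw [hβdef]
    field_simp
  have : -(t/2) * l ^ (2*α - 1) = -s := by rw [hsdef]; ring
  rw [this]
  exact hmain.trans hre.le


theorem stmt_5
    {X : Type*} [NormedAddCommGroup X] [InnerProductSpace ℝ X] [CompleteSpace X]
    [TopologicalSpace.SeparableSpace X]
    {ι : Type*} (e : HilbertBasis ι ℝ X) (q : ι → ℝ) (Q : X →L[ℝ] X)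
    (hq : ∀ i, 0 < q i)
    (hdiag : ∀ i, Q (e i) = q i • e i)
    (hsa : IsSelfAdjoint Q)
    (hpos : ∀ x : X, x ≠ 0 → 0 < ⟪Q x, x⟫)
    (hcomp : IsCompactOperator Q)
    (htrace : Summable fun i => ⟪Q (e i), e i⟫)
    {α : ℝ} (hα : α ∈ Set.Ico (0 : ℝ) (1/2))
    {γ : ℝ} (hγ : 0 < γ)
    (Qγ : X →L[ℝ] X) (hQγ : ∀ i, Qγ (e i) = (q i) ^ γ • e i)
    (hinjγ : Function.Injective Qγ)
    (S : ℝ → X →L[ℝ] X)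
    (hS0 : S 0 = ContinuousLinearMap.id ℝ X)
    (hSdiag : ∀ t > (0 : ℝ), ∀ i,
      S t (e i) = Real.exp (-(t/2) * (q i) ^ (2*α - 1)) • e i)
    {t : ℝ} (ht : 0 < t) :
    ∀ x : X, ∃ v : X, Qγ v = S t x ∧
      ‖v‖ ≤ (2*γ/(Real.exp 1 * (1 - 2*α))) ^ (γ/(1 - 2*α))
        * t ^ (-(γ/(1 - 2*α))) * ‖x‖ := by
  have h2α : 0 < 1 - 2*α := by have := hα.2; linarith
  set M := (2*γ/(Real.exp 1 * (1 - 2*α))) ^ (γ/(1 - 2*α)) * t ^ (-(γ/(1 - 2*α))) with hM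
  have hbase : (0:ℝ) < 2*γ/(Real.exp 1 * (1 - 2*α)) := div_pos (by linarith) (by positivity)
  have hM0 : 0 ≤ M :=
    mul_nonneg (Real.rpow_nonneg hbase.le _) (Real.rpow_nonneg ht.le _)
  intro x
  set c : ι → ℝ := fun i => Real.exp (-(t/2) * (q i) ^ (2*α - 1)) * (q i) ^ (-γ) with hc
  have hc0 : ∀ i, 0 ≤ c i := fun i =>
    mul_nonneg (Real.exp_pos _).le (Real.rpow_nonneg (hq i).le _)
  have hcM : ∀ i, c i ≤ M := fun i => aux_key hα hγ ht (hq i)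
  set f : ι → ℝ := fun i => c i * e.repr x i with hf
  have hbound : ∀ i, ‖f i‖ ≤ M * ‖e.repr x i‖ := by
    intro i
    calc ‖f i‖ = c i * ‖e.repr x i‖ := by
          rw [hf, norm_mul, Real.norm_of_nonneg (hc0 i)]
      _ ≤ M * ‖e.repr x i‖ := mul_le_mul_of_nonneg_right (hcM i) (norm_nonneg _)
  have hp2 : (0:ℝ) < (2:ℝ≥0∞).toReal := by norm_num
  have hsum_x : Summable (fun i => ‖e.repr x i‖ ^ (2:ℝ≥0∞).toReal) :=
    (lp.memℓp (e.repr x)).summable hp2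
  have hsum_bound : Summable (fun i => (M * ‖e.repr x i‖) ^ (2:ℝ≥0∞).toReal) := by
    refine (hsum_x.mul_left (M ^ (2:ℝ≥0∞).toReal)).congr fun i => ?_
    rw [Real.mul_rpow hM0 (norm_nonneg _)]
  have hsumf : Summable (fun i => ‖f i‖ ^ (2:ℝ≥0∞).toReal) := by
    refine Summable.of_nonneg_of_le (fun i => by positivity)
      (fun i => Real.rpow_le_rpow (norm_nonneg _) (hbound i) hp2.le) hsum_bound
  have hfmem : Memℓp f 2 := memℓp_gen hsumf
  set F : lp (fun _ : ι => ℝ) 2 := ⟨f, hfmem⟩ with hF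
  set v := e.repr.symm F with hv
  refine ⟨v, ?_, ?_⟩
  · -- Qγ v = S t x
    have hsumv : HasSum (fun i => f i • e i) v := e.hasSum_repr_symm F
    have hQv : HasSum
        (fun i => (Real.exp (-(t/2) * (q i) ^ (2*α - 1)) * e.repr x i) • e i) (Qγ v) := by
      have h := hsumv.mapL Qγ
      have heq : ∀ i, Qγ (f i • e i)
          = (Real.exp (-(t/2) * (q i) ^ (2*α - 1)) * e.repr x i) • e i := by
        intro i
        rw [map_smul, hQγ i, smul_smul]
        congr 1
        have hqγ : (q i) ^ (-γ) * (q i) ^ γ = 1 := by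
          rw [← Real.rpow_add (hq i)]; simp
        calc f i * (q i) ^ γ
            = Real.exp (-(t/2) * (q i) ^ (2*α - 1)) * e.repr x i
              * ((q i) ^ (-γ) * (q i) ^ γ) := by rw [hf, hc]; ring
          _ = Real.exp (-(t/2) * (q i) ^ (2*α - 1)) * e.repr x i := by
              rw [hqγ, mul_one]
      simpa only [heq] using h
    have hSx : HasSum
        (fun i => (Real.exp (-(t/2) * (q i) ^ (2*α - 1)) * e.repr x i) • e i) (S t x) := by
      have h := (e.hasSum_repr x).mapL (S t)
      have heq : ∀ i, S t (e.repr x i • e i)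
          = (Real.exp (-(t/2) * (q i) ^ (2*α - 1)) * e.repr x i) • e i := by
        intro i
        rw [map_smul, hSdiag t ht i, smul_smul, mul_comm]
      simpa only [heq] using h
    exact hQv.unique hSx
  · -- norm bound
    have hnv : ‖v‖ = ‖F‖ := e.repr.symm.norm_map F
    have hFle : ‖F‖ ≤ M * ‖x‖ := by
      refine lp.norm_le_of_tsum_le hp2 (mul_nonneg hM0 (norm_nonneg x)) ?_
      have h1 : ∑' i, ‖F i‖ ^ (2:ℝ≥0∞).toReal
          ≤ ∑' i, (M * ‖e.repr x i‖) ^ (2:ℝ≥0∞).toReal := by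
        refine Summable.tsum_le_tsum (fun i => Real.rpow_le_rpow (norm_nonneg _)
          (hbound i) hp2.le) hsumf hsum_bound
      have h2 : ∑' i, (M * ‖e.repr x i‖) ^ (2:ℝ≥0∞).toReal
          = M ^ (2:ℝ≥0∞).toReal * ∑' i, ‖e.repr x i‖ ^ (2:ℝ≥0∞).toReal := by
        rw [← tsum_mul_left]
        exact tsum_congr fun i => Real.mul_rpow hM0 (norm_nonneg _)
      have h3 : ∑' i, ‖e.repr x i‖ ^ (2:ℝ≥0∞).toReal = ‖e.repr x‖ ^ (2:ℝ≥0∞).toReal :=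
        (lp.norm_rpow_eq_tsum hp2 (e.repr x)).symm
      have h4 : (M * ‖x‖) ^ (2:ℝ≥0∞).toReal
          = M ^ (2:ℝ≥0∞).toReal * ‖e.repr x‖ ^ (2:ℝ≥0∞).toReal := by
        rw [Real.mul_rpow hM0 (norm_nonneg x), e.repr.norm_map x]
      calc ∑' i, ‖F i‖ ^ (2:ℝ≥0∞).toReal
          ≤ ∑' i, (M * ‖e.repr x i‖) ^ (2:ℝ≥0∞).toReal := h1
        _ = M ^ (2:ℝ≥0∞).toReal * ‖e.repr x‖ ^ (2:ℝ≥0∞).toReal := by rw [h2, h3]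
        _ = (M * ‖x‖) ^ (2:ℝ≥0∞).toReal := h4.symm
    rw [hnv]
    exact hFle
end
end

section
/- Let α ∈ [0,1/4), T > 0 and k ∈ X. Then the nonnegative function s ↦ ‖Q^{-α}(e^{sA}k)‖², defined for s ∈ (0,T] (where e^{sA}k ∈ Q^α(X) by the smoothing property of the semigroup), satisfies ∫₀^T ‖Q^{-α}(e^{sA}k)‖² ds ≤ (2α/(e(1−2α)))^{2α/(1−2α)} · ((1−2α)/(1−4α)) · T^{(1−4α)/(1−2α)} · ‖k‖². -/
/-!
Context: as before; `Q^α` is the unique bounded operator `Qα` with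
`Qα (e i) = (q i)^α • e i`, injective (`hinj`); `e^{sA}` is the unique family `S` with
`S 0 = Id` and `S s (e i) = exp(−(s/2)(q i)^{2α−1}) • e i` for `s > 0`.

STATEMENT 6: for `α ∈ [0,1/4)`, `T > 0`, `k ∈ X`: for every `s ∈ (0,T]` one has
`e^{sA}k ∈ Q^α(X)` (smoothing), and the nonnegative function
`s ↦ ‖Q^{-α}(e^{sA}k)‖²` — i.e. `s ↦ ‖v s‖²` for any (necessarily unique on `(0,T]`, by
`hinj`) choice of preimages `v` with `Qα (v s) = e^{sA}k` — satisfies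
`∫₀^T ‖Q^{-α}(e^{sA}k)‖² ds
  ≤ (2α/(e(1−2α)))^{2α/(1−2α)} · ((1−2α)/(1−4α)) · T^{(1−4α)/(1−2α)} · ‖k‖²`,
formulated with the (always defined) lower Lebesgue integral.
-/

open scoped RealInnerProductSpace ENNReal
open MeasureTheory

noncomputable section

lemma auxA {γ t : ℝ} (hγ : 0 ≤ γ) (ht : 0 ≤ t) :
    t ^ γ * Real.exp (-t) ≤ (γ / Real.exp 1) ^ γ := by
  rcases eq_or_lt_of_le hγ with h0 | hγpos
  · rw [← h0, Real.rpow_zero, Real.rpow_zero, one_mul]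
    exact Real.exp_le_one_iff.mpr (by linarith)
  rcases eq_or_lt_of_le ht with h0 | htpos
  · rw [← h0, Real.zero_rpow (ne_of_gt hγpos), zero_mul]
    exact Real.rpow_nonneg (by positivity) _
  · have h1 : Real.log (t / γ) ≤ t / γ - 1 := Real.log_le_sub_one_of_pos (by positivity)
    have h1' : γ * Real.log (t / γ) ≤ t - γ := by
      have := mul_le_mul_of_nonneg_left h1 hγ
      have hγt : γ * (t / γ) = t := by field_simp
      nlinarith
    rw [Real.log_div (ne_of_gt htpos) (ne_of_gt hγpos)] at h1'
    have h2 : γ * Real.log t - t ≤ γ * (Real.log γ - 1) := by nlinarith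
    have hL : t ^ γ * Real.exp (-t) = Real.exp (γ * Real.log t - t) := by
      rw [Real.rpow_def_of_pos htpos, ← Real.exp_add]
      ring_nf
    have hR : (γ / Real.exp 1) ^ γ = Real.exp (γ * (Real.log γ - 1)) := by
      rw [Real.rpow_def_of_pos (by positivity),
        Real.log_div (ne_of_gt hγpos) (Real.exp_ne_zero 1), Real.log_exp, mul_comm]
    rw [hL, hR]
    exact Real.exp_le_exp.mpr h2

lemma auxB {α s lam : ℝ} (hα0 : 0 ≤ α) (hα2 : α < 1/2) (hs : 0 < s) (hl : 0 < lam) :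
    lam ^ (-(2*α)) * Real.exp (-(s * lam ^ (2*α-1))) ≤
      (2*α/(Real.exp 1 * (1 - 2*α))) ^ (2*α/(1-2*α)) * s ^ (-(2*α/(1-2*α))) := by
  have h12 : (0:ℝ) < 1 - 2*α := by linarith
  set γ := 2*α/(1-2*α) with hγdef
  have hγ0 : 0 ≤ γ := by positivity
  set t := s * lam ^ (2*α-1) with htdef
  have hlam : (0:ℝ) < lam ^ (2*α-1) := Real.rpow_pos_of_pos hl _
  have htpos : 0 < t := by positivity
  have hts : t / s = lam ^ (2*α-1) := by rw [htdef]; field_simp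
  have h1 : lam ^ (-(2*α)) = (t/s) ^ γ := by
    rw [hts, ← Real.rpow_mul hl.le]
    congr 1
    rw [hγdef]; field_simp; ring
  have h2 : (t/s) ^ γ = t ^ γ * s ^ (-γ) := by
    rw [Real.div_rpow htpos.le hs.le, Real.rpow_neg hs.le, div_eq_mul_inv]
  have h3 : t ^ γ * Real.exp (-t) ≤ (γ / Real.exp 1) ^ γ := auxA hγ0 htpos.le
  have hbase : γ / Real.exp 1 = 2*α/(Real.exp 1 * (1 - 2*α)) := by
    rw [hγdef, div_div]; ring_nf
  calc lam ^ (-(2*α)) * Real.exp (-t) = (t ^ γ * Real.exp (-t)) * s ^ (-γ) := by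
        rw [h1, h2]; ring
    _ ≤ (γ / Real.exp 1) ^ γ * s ^ (-γ) := by
        apply mul_le_mul_of_nonneg_right h3 (Real.rpow_nonneg hs.le _)
    _ = (2*α/(Real.exp 1 * (1 - 2*α))) ^ γ * s ^ (-γ) := by rw [hbase]


theorem stmt_6
    {X : Type*} [NormedAddCommGroup X] [InnerProductSpace ℝ X] [CompleteSpace X]
    [TopologicalSpace.SeparableSpace X]
    {ι : Type*} (e : HilbertBasis ι ℝ X) (q : ι → ℝ) (Q : X →L[ℝ] X)
    (hq : ∀ i, 0 < q i)
    (hdiag : ∀ i, Q (e i) = q i • e i)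
    (hsa : IsSelfAdjoint Q)
    (hpos : ∀ x : X, x ≠ 0 → 0 < ⟪Q x, x⟫)
    (hcomp : IsCompactOperator Q)
    (htrace : Summable fun i => ⟪Q (e i), e i⟫)
    {α : ℝ} (hα : α ∈ Set.Ico (0 : ℝ) (1/4))
    (Qα : X →L[ℝ] X) (hQα : ∀ i, Qα (e i) = (q i) ^ α • e i)
    (hinj : Function.Injective Qα)
    (S : ℝ → X →L[ℝ] X)
    (hS0 : S 0 = ContinuousLinearMap.id ℝ X)
    (hSdiag : ∀ s > (0 : ℝ), ∀ i,
      S s (e i) = Real.exp (-(s/2) * (q i) ^ (2*α - 1)) • e i)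
    {T : ℝ} (hT : 0 < T) (k : X) :
    (∀ s ∈ Set.Ioc (0 : ℝ) T, S s k ∈ Set.range ⇑Qα) ∧
    ∀ v : ℝ → X, (∀ s ∈ Set.Ioc (0 : ℝ) T, Qα (v s) = S s k) →
      ∫⁻ s in Set.Ioc (0 : ℝ) T, ENNReal.ofReal (‖v s‖ ^ 2)
        ≤ ENNReal.ofReal
            ((2*α/(Real.exp 1 * (1 - 2*α))) ^ (2*α/(1 - 2*α))
              * ((1 - 2*α)/(1 - 4*α)) * T ^ ((1 - 4*α)/(1 - 2*α)) * ‖k‖ ^ 2) := by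
  obtain ⟨hα0, hα4⟩ := hα
  have h12 : (0:ℝ) < 1 - 2*α := by linarith
  have h14 : (0:ℝ) < 1 - 4*α := by linarith
  set γ := 2*α/(1-2*α) with hγdef
  have hγ0 : 0 ≤ γ := by positivity
  have hγ1 : γ < 1 := by rw [hγdef, div_lt_one h12]; linarith
  set C := (2*α/(Real.exp 1 * (1-2*α))) ^ γ with hCdef
  have hC0 : 0 ≤ C := Real.rpow_nonneg (by positivity) _
  set ki : ι → ℝ := fun i => e.repr k i with hki
  have htwo : ((2:ℝ≥0∞).toReal) = (2:ℝ) := by simp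
  have hki_sum : Summable fun i => ki i ^ 2 := by
    have h := (lp.memℓp (e.repr k)).summable (p := 2) (by norm_num)
    rw [htwo] at h
    simpa [Real.rpow_natCast, Real.norm_eq_abs, sq_abs] using h
  have hki_tsum : ∑' i, ki i ^ 2 = ‖k‖ ^ 2 := by
    have h1 := lp.norm_rpow_eq_tsum (p := 2) (by norm_num) (e.repr k)
    rw [htwo] at h1
    rw [e.repr.norm_map k] at h1
    simpa [Real.rpow_natCast, Real.norm_eq_abs, sq_abs] using h1.symm
  set f : ℝ → ι → ℝ := fun s i =>
    (q i) ^ (-α) * Real.exp (-(s/2) * (q i) ^ (2*α-1)) * ki i with hf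
  have hfsq : ∀ s i, f s i ^ 2 =
      ((q i) ^ (-(2*α)) * Real.exp (-(s * (q i) ^ (2*α-1)))) * ki i ^ 2 := by
    intro s i
    have h1 : (q i) ^ (-α) * (q i) ^ (-α) = (q i) ^ (-(2*α)) := by
      rw [← Real.rpow_add (hq i)]; ring_nf
    have h2 : Real.exp (-(s/2) * (q i) ^ (2*α-1)) * Real.exp (-(s/2) * (q i) ^ (2*α-1))
        = Real.exp (-(s * (q i) ^ (2*α-1))) := by
      rw [← Real.exp_add]; ring_nf
    calc f s i ^ 2 = ((q i) ^ (-α) * (q i) ^ (-α)) *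
          (Real.exp (-(s/2) * (q i) ^ (2*α-1)) * Real.exp (-(s/2) * (q i) ^ (2*α-1)))
          * ki i ^ 2 := by rw [hf]; ring
      _ = _ := by rw [h1, h2]
  have hbound : ∀ s, 0 < s → ∀ i, f s i ^ 2 ≤ (C * s ^ (-γ)) * ki i ^ 2 := by
    intro s hs i
    rw [hfsq]
    have h := auxB hα0 (by linarith) hs (hq i)
    exact mul_le_mul_of_nonneg_right h (sq_nonneg _)
  have hfsummable : ∀ s, 0 < s → Summable fun i => f s i ^ 2 := fun s hs =>
    Summable.of_nonneg_of_le (fun i => sq_nonneg _) (hbound s hs) (hki_sum.mul_left _)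
  have hfmem : ∀ s, 0 < s → Memℓp (f s) 2 := by
    intro s hs
    apply memℓp_gen
    rw [htwo]
    simpa [Real.rpow_natCast, Real.norm_eq_abs, sq_abs] using hfsummable s hs
  have key : ∀ s, 0 < s → ∃ w : X, Qα w = S s k ∧ ‖w‖ ^ 2 ≤ C * s ^ (-γ) * ‖k‖ ^ 2 := by
    intro s hs
    set F : lp (fun _ : ι => ℝ) 2 := ⟨f s, hfmem s hs⟩ with hF
    refine ⟨e.repr.symm F, ?_, ?_⟩
    · have h1 : HasSum (fun i => f s i • e i) (e.repr.symm F) := e.hasSum_repr_symm F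
      have h2 := h1.mapL Qα
      have h3 : HasSum (fun i => ki i • e i) k := e.hasSum_repr k
      have h4 := h3.mapL (S s)
      have heq : (fun i => Qα (f s i • e i)) = fun i => S s (ki i • e i) := by
        funext i
        rw [_root_.map_smul, _root_.map_smul, hQα i, hSdiag s hs i, smul_smul, smul_smul]
        congr 1
        have hcan : (q i) ^ (-α) * (q i) ^ α = 1 := by
          rw [← Real.rpow_add (hq i)]; simp
        rw [hf]
        calc (q i) ^ (-α) * Real.exp (-(s/2) * (q i) ^ (2*α-1)) * ki i * (q i) ^ α
            = ((q i) ^ (-α) * (q i) ^ α) * (Real.exp (-(s/2) * (q i) ^ (2*α-1)) * ki i) := by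
              ring
          _ = ki i * Real.exp (-(s/2) * (q i) ^ (2*α-1)) := by rw [hcan]; ring
      rw [heq] at h2
      exact h2.unique h4
    · have hnorm : ‖e.repr.symm F‖ = ‖F‖ := e.repr.symm.norm_map F
      have h1 := lp.norm_rpow_eq_tsum (p := 2) (by norm_num) F
      rw [htwo] at h1
      have h1' : ‖F‖ ^ 2 = ∑' i, f s i ^ 2 := by
        simpa [Real.rpow_natCast, Real.norm_eq_abs, sq_abs] using h1
      rw [hnorm, h1']
      calc ∑' i, f s i ^ 2 ≤ ∑' i, (C * s ^ (-γ)) * ki i ^ 2 :=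
            Summable.tsum_le_tsum (hbound s hs) (hfsummable s hs) (hki_sum.mul_left _)
        _ = (C * s ^ (-γ)) * ∑' i, ki i ^ 2 := tsum_mul_left
        _ = C * s ^ (-γ) * ‖k‖ ^ 2 := by rw [hki_tsum]
  constructor
  · exact fun s hs => (key s hs.1).elim fun w hw => ⟨w, hw.1⟩
  · intro v hv
    have hmono : ∫⁻ s in Set.Ioc (0:ℝ) T, ENNReal.ofReal (‖v s‖ ^ 2)
        ≤ ∫⁻ s in Set.Ioc (0:ℝ) T, ENNReal.ofReal (C * ‖k‖ ^ 2 * s ^ (-γ)) := by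
      apply setLIntegral_mono' measurableSet_Ioc
      intro s hs
      apply ENNReal.ofReal_le_ofReal
      obtain ⟨w, hw1, hw2⟩ := key s hs.1
      have hvw : v s = w := hinj (by rw [hv s hs, hw1])
      rw [hvw]
      calc ‖w‖ ^ 2 ≤ C * s ^ (-γ) * ‖k‖ ^ 2 := hw2
        _ = C * ‖k‖ ^ 2 * s ^ (-γ) := by ring
    have hint : IntegrableOn (fun s : ℝ => C * ‖k‖ ^ 2 * s ^ (-γ)) (Set.Ioc 0 T) := by
      have h := (intervalIntegral.intervalIntegrable_rpow' (a := 0) (b := T)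
        (r := -γ) (by linarith)).1
      exact h.const_mul _
    have heq2 : ∫⁻ s in Set.Ioc (0:ℝ) T, ENNReal.ofReal (C * ‖k‖ ^ 2 * s ^ (-γ))
        = ENNReal.ofReal (∫ s in Set.Ioc (0:ℝ) T, C * ‖k‖ ^ 2 * s ^ (-γ)) := by
      rw [← ofReal_integral_eq_lintegral_ofReal hint]
      filter_upwards [ae_restrict_mem measurableSet_Ioc] with s hs
      have : (0:ℝ) < s := hs.1
      positivity
    have hval : ∫ s in Set.Ioc (0:ℝ) T, C * ‖k‖ ^ 2 * s ^ (-γ)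
        = C * ((1 - 2*α)/(1 - 4*α)) * T ^ ((1 - 4*α)/(1 - 2*α)) * ‖k‖ ^ 2 := by
      rw [MeasureTheory.integral_const_mul]
      rw [← intervalIntegral.integral_of_le hT.le]
      rw [integral_rpow (Or.inl (by linarith))]
      have hz : (0:ℝ) ^ (-γ + 1) = 0 := Real.zero_rpow (by linarith)
      rw [hz]
      have hexp : -γ + 1 = (1 - 4*α)/(1 - 2*α) := by
        rw [hγdef]; field_simp; ring
      rw [hexp, sub_zero, div_eq_mul_inv, inv_div]
      ring
    calc ∫⁻ s in Set.Ioc (0:ℝ) T, ENNReal.ofReal (‖v s‖ ^ 2)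
        ≤ ∫⁻ s in Set.Ioc (0:ℝ) T, ENNReal.ofReal (C * ‖k‖ ^ 2 * s ^ (-γ)) := hmono
      _ = ENNReal.ofReal (∫ s in Set.Ioc (0:ℝ) T, C * ‖k‖ ^ 2 * s ^ (-γ)) := heq2
      _ = ENNReal.ofReal (C * ((1 - 2*α)/(1 - 4*α)) * T ^ ((1 - 4*α)/(1 - 2*α)) * ‖k‖ ^ 2) := by
          rw [hval]
end
end

section
/- Let α ∈ [0,1/4), T > 0 and L ≥ 0. Let F : X → X be a function with F(X) ⊆ H_α which is H_α-Lipschitz with constant L, i.e. ‖Q^{-α}(F(x+h)) − Q^{-α}(F(x))‖ ≤ L·‖Q^{-α}h‖ for every x ∈ X and h ∈ H_α. Then for every x ∈ X the (upper Lebesgue) integral of the nonnegative function s ↦ ‖Q^{-α}(F(e^{sA}x))‖² over [0,T] is finite: ∫₀^T ‖Q^{-α}(F(e^{sA}x))‖² ds < ∞. -/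
/-!
For `s > 0` the operator `Q^{-α} e^{sA}` is diagonal with eigenvalues `λ^γ e^{-sλ/2}`, where
`λ = q^{2α-1}` runs over the eigenvalues of `-2A` and `γ = α / (1 - 2α)`. Since
`λ^γ e^{-sλ/2} ≤ (s/2)^{-γ}`, every `e^{sA} x` lies in `H_α` with
`‖e^{sA} x‖_α ≤ (s/2)^{-γ} ‖x‖`. The Lipschitz bound at the base point `0` then gives
`‖Q^{-α} F(e^{sA} x)‖ ≤ ‖Q^{-α} F 0‖ + L (s/2)^{-γ} ‖x‖`, whose square is integrable near `0`
because `2γ < 1`, i.e. `α < 1/4`.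
-/

open scoped RealInnerProductSpace lp
open MeasureTheory

theorem Real.rpow_le_exp_self {γ t : ℝ} (hγ0 : 0 ≤ γ) (hγ1 : γ ≤ 1) (ht : 0 ≤ t) :
    t ^ γ ≤ Real.exp t := by
  rcases le_total t 1 with h | h
  · exact (Real.rpow_le_one ht h hγ0).trans (Real.one_le_exp ht)
  · calc t ^ γ ≤ t ^ (1 : ℝ) := Real.rpow_le_rpow_of_exponent_le h hγ1
      _ = t := Real.rpow_one t
      _ ≤ Real.exp t := by linarith [Real.add_one_le_exp t]

theorem Real.rpow_mul_exp_neg_mul_le {γ c t : ℝ} (hγ0 : 0 ≤ γ) (hγ1 : γ ≤ 1) (hc : 0 < c)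
    (ht : 0 ≤ t) : t ^ γ * Real.exp (-(c * t)) ≤ c ^ (-γ) := by
  calc t ^ γ * Real.exp (-(c * t))
      = c ^ (-γ) * ((c * t) ^ γ * Real.exp (-(c * t))) := by
        rw [Real.mul_rpow hc.le ht, Real.rpow_neg hc.le]
        field_simp
    _ ≤ c ^ (-γ) * (Real.exp (c * t) * Real.exp (-(c * t))) := by
        gcongr
        exact Real.rpow_le_exp_self hγ0 hγ1 (by positivity)
    _ = c ^ (-γ) := by rw [← Real.exp_add, add_neg_cancel, Real.exp_zero, mul_one]

theorem lp.exists_mul_norm_le {ι : Type*} {c : ι → ℝ} {M : ℝ} (hM : 0 ≤ M)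
    (hc : ∀ i, |c i| ≤ M) (f : ℓ²(ι, ℝ)) :
    ∃ g : ℓ²(ι, ℝ), (∀ i, g i = c i * f i) ∧ ‖g‖ ≤ M * ‖f‖ := by
  have hle : ∀ i, ‖c i * f i‖ ≤ ‖(M • f) i‖ := fun i => by
    rw [lp.coeFn_smul, Pi.smul_apply, norm_smul, norm_mul, Real.norm_of_nonneg hM]
    exact mul_le_mul_of_nonneg_right (hc i) (norm_nonneg _)
  refine ⟨⟨fun i => c i * f i, (lp.memℓp (M • f)).mono' hle⟩, fun i => rfl, ?_⟩
  calc _ ≤ ‖M • f‖ := lp.norm_mono two_ne_zero hle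
    _ = M * ‖f‖ := by rw [norm_smul, Real.norm_of_nonneg hM]

theorem HilbertBasis.hasSum_apply_repr_symm_of_diag {X ι : Type*} [NormedAddCommGroup X]
    [InnerProductSpace ℝ X] (e : HilbertBasis ι ℝ X) {B : X →L[ℝ] X} {d : ι → ℝ}
    (hB : ∀ i, B (e i) = d i • e i) (f : ℓ²(ι, ℝ)) :
    HasSum (fun i => (d i * f i) • e i) (B (e.repr.symm f)) := by
  simpa [hB, smul_smul, mul_comm] using (e.hasSum_repr_symm f).mapL B

theorem exists_fracPow_apply_eq_semigroup_apply {X ι : Type*} [NormedAddCommGroup X]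
    [InnerProductSpace ℝ X] (e : HilbertBasis ι ℝ X) {q : ι → ℝ} (hq : ∀ i, 0 < q i)
    {α : ℝ} (hα : α ∈ Set.Icc (0 : ℝ) (1/3)) {Qα : X →L[ℝ] X}
    (hQα : ∀ i, Qα (e i) = q i ^ α • e i) {s : ℝ} (hs : 0 < s) {Ss : X →L[ℝ] X}
    (hSs : ∀ i, Ss (e i) = Real.exp (-(s/2) * q i ^ (2*α - 1)) • e i) (x : X) :
    ∃ u : X, Qα u = Ss x ∧ ‖u‖ ≤ (s/2) ^ (-(α / (1 - 2*α))) * ‖x‖ := by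
  obtain ⟨hα0, hα3⟩ := hα
  set γ := α / (1 - 2*α) with hγ
  have hγ0 : 0 ≤ γ := div_nonneg hα0 (by linarith)
  have hγ1 : γ ≤ 1 := (div_le_one (by linarith)).2 (by linarith)
  have hc : ∀ i, |q i ^ (-α) * Real.exp (-(s/2) * q i ^ (2*α - 1))| ≤ (s/2) ^ (-γ) := by
    intro i
    have hqγ : (q i ^ (2*α - 1)) ^ γ = q i ^ (-α) := by
      rw [← Real.rpow_mul (hq i).le, hγ]
      congr 1
      field_simp [show 1 - 2*α ≠ 0 by linarith]
      ring
    have hq' : 0 ≤ q i ^ (2*α - 1) := Real.rpow_nonneg (hq i).le _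
    rw [abs_of_nonneg (mul_nonneg (Real.rpow_nonneg (hq i).le _) (Real.exp_pos _).le), ← hqγ,
      neg_mul]
    exact Real.rpow_mul_exp_neg_mul_le hγ0 hγ1 (by positivity) hq'
  obtain ⟨g, hg, hgx⟩ := lp.exists_mul_norm_le (by positivity) hc (e.repr x)
  refine ⟨e.repr.symm g, ?_, by rwa [LinearIsometryEquiv.norm_map, ← e.repr.norm_map x]⟩
  refine (e.hasSum_apply_repr_symm_of_diag hQα g).unique ?_
  convert e.hasSum_apply_repr_symm_of_diag hSs (e.repr x) using 3 with i
  · rw [hg, ← mul_assoc, ← mul_assoc, ← Real.rpow_add (hq i), add_neg_cancel, Real.rpow_zero,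
      one_mul]
  · simp

theorem lintegral_norm_sq_lt_top_of_norm_le {E : Type*} [NormedAddCommGroup E] {f : ℝ → E}
    {a b γ T : ℝ} (hγ : γ < 1/2) (hf : ∀ s ∈ Set.Ioc 0 T, ‖f s‖ ≤ a + b * s ^ (-γ)) :
    ∫⁻ s in Set.Ioc 0 T, ENNReal.ofReal (‖f s‖ ^ 2) < ⊤ := by
  have hpow : IntegrableOn (fun s : ℝ => s ^ (-(γ * 2))) (Set.Ioc 0 T) :=
    (intervalIntegral.intervalIntegrable_rpow' (by linarith)).1
  have hg : IntegrableOn (fun s => 2 * (a ^ 2 + b ^ 2 * s ^ (-(γ * 2)))) (Set.Ioc 0 T) :=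
    ((integrableOn_const measure_Ioc_lt_top.ne).add (hpow.const_mul _)).const_mul 2
  refine (lintegral_mono_ae ?_).trans_lt hg.lintegral_lt_top
  refine ae_restrict_of_forall_mem measurableSet_Ioc fun s hs => ENNReal.ofReal_le_ofReal ?_
  calc ‖f s‖ ^ 2 ≤ (a + b * s ^ (-γ)) ^ 2 := pow_le_pow_left₀ (norm_nonneg _) (hf s hs) 2
    _ ≤ 2 * (a ^ 2 + (b * s ^ (-γ)) ^ 2) := add_sq_le
    _ = 2 * (a ^ 2 + b ^ 2 * s ^ (-(γ * 2))) := by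
        rw [mul_pow, ← Real.rpow_mul_natCast hs.1.le]; norm_num

theorem stmt_7_general
    {X : Type*} [NormedAddCommGroup X] [InnerProductSpace ℝ X]
    {ι : Type*} (e : HilbertBasis ι ℝ X) (q : ι → ℝ)
    (hq : ∀ i, 0 < q i)
    {α : ℝ} (hα : α ∈ Set.Ico (0 : ℝ) (1/4))
    (Qα : X →L[ℝ] X) (hQα : ∀ i, Qα (e i) = (q i) ^ α • e i)
    (S : ℝ → X →L[ℝ] X)
    (hSdiag : ∀ s > (0 : ℝ), ∀ i,
      S s (e i) = Real.exp (-(s/2) * (q i) ^ (2*α - 1)) • e i)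
    {T : ℝ} {L : ℝ} (hL : 0 ≤ L)
    (F : X → X)
    (hFlip : ∀ x u : X,
      ‖Function.invFun ⇑Qα (F (x + Qα u)) - Function.invFun ⇑Qα (F x)‖ ≤ L * ‖u‖) :
    ∀ x : X,
      ∫⁻ s in Set.Ioc (0 : ℝ) T,
        ENNReal.ofReal (‖Function.invFun ⇑Qα (F (S s x))‖ ^ 2) < ⊤ := by
  intro x
  obtain ⟨hα0, hα4⟩ := hα
  set γ := α / (1 - 2*α)
  have hγ : γ < 1/2 := by rw [div_lt_iff₀ (by linarith)]; linarith
  refine lintegral_norm_sq_lt_top_of_norm_le (a := ‖Function.invFun Qα (F 0)‖)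
    (b := L * ‖x‖ * 2 ^ γ) hγ fun s hs => ?_
  obtain ⟨u, hu, hux⟩ := exists_fracPow_apply_eq_semigroup_apply e hq ⟨hα0, by linarith⟩ hQα
    hs.1 (hSdiag s hs.1) x
  have hs2 : (s/2) ^ (-γ) = 2 ^ γ * s ^ (-γ) := by
    rw [Real.div_rpow hs.1.le zero_le_two, Real.rpow_neg zero_le_two, div_inv_eq_mul, mul_comm]
  calc ‖Function.invFun Qα (F (S s x))‖
      ≤ ‖Function.invFun Qα (F 0)‖
          + ‖Function.invFun Qα (F (0 + Qα u)) - Function.invFun Qα (F 0)‖ := by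
        rw [zero_add, hu]; exact norm_le_norm_add_norm_sub' _ _
    _ ≤ ‖Function.invFun Qα (F 0)‖ + L * ‖u‖ := by gcongr; exact hFlip 0 u
    _ ≤ ‖Function.invFun Qα (F 0)‖ + L * ((s/2) ^ (-γ) * ‖x‖) := by gcongr
    _ = ‖Function.invFun Qα (F 0)‖ + L * ‖x‖ * 2 ^ γ * s ^ (-γ) := by rw [hs2]; ring

theorem stmt_7
    {X : Type*} [NormedAddCommGroup X] [InnerProductSpace ℝ X] [CompleteSpace X]
    [TopologicalSpace.SeparableSpace X]
    {ι : Type*} (e : HilbertBasis ι ℝ X) (q : ι → ℝ) (Q : X →L[ℝ] X)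
    (hq : ∀ i, 0 < q i)
    (hdiag : ∀ i, Q (e i) = q i • e i)
    (hsa : IsSelfAdjoint Q)
    (hpos : ∀ x : X, x ≠ 0 → 0 < ⟪Q x, x⟫)
    (hcomp : IsCompactOperator Q)
    (htrace : Summable fun i => ⟪Q (e i), e i⟫)
    {α : ℝ} (hα : α ∈ Set.Ico (0 : ℝ) (1/4))
    (Qα : X →L[ℝ] X) (hQα : ∀ i, Qα (e i) = (q i) ^ α • e i)
    (hinj : Function.Injective Qα)
    (S : ℝ → X →L[ℝ] X)
    (hS0 : S 0 = ContinuousLinearMap.id ℝ X)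
    (hSdiag : ∀ s > (0 : ℝ), ∀ i,
      S s (e i) = Real.exp (-(s/2) * (q i) ^ (2*α - 1)) • e i)
    {T : ℝ} (hT : 0 < T) {L : ℝ} (hL : 0 ≤ L)
    (F : X → X)
    (hFrange : ∀ x : X, F x ∈ Set.range ⇑Qα)
    (hFlip : ∀ x u : X,
      ‖Function.invFun ⇑Qα (F (x + Qα u)) - Function.invFun ⇑Qα (F x)‖ ≤ L * ‖u‖) :
    ∀ x : X,
      ∫⁻ s in Set.Ioc (0 : ℝ) T,
        ENNReal.ofReal (‖Function.invFun ⇑Qα (F (S s x))‖ ^ 2) < ⊤ :=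
  stmt_7_general e q hq hα Qα hQα S hSdiag hL F hFlip
end

section
/- Assume X ≠ {0}. Let α ∈ [0,1/2) and t > 0. Then ‖e^{tA}‖ ≤ exp(−(t/2)·‖Q‖^{2α−1}) < 1, and consequently Id − e^{tA} is an invertible element of the algebra of bounded linear operators on X. -/
/-!
`e^{tA}` acts diagonally on the Hilbert basis in which `Q` is diagonal, so its norm is at most
the supremum of its diagonal entries `exp(-(t/2) q_i^{2α-1})`. Since `2α - 1 < 0` and every `q_i`
is at most `‖Q‖`, each entry is at most `exp(-(t/2) ‖Q‖^{2α-1}) < 1`, and `Id - e^{tA}` is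
inverted by the Neumann series.
-/

open scoped RealInnerProductSpace

namespace HilbertBasis

variable {ι 𝕜 E : Type*} [RCLike 𝕜] [NormedAddCommGroup E] [InnerProductSpace 𝕜 E]

theorem nonempty_index [Nontrivial E] (b : HilbertBasis ι 𝕜 E) : Nonempty ι := by
  by_contra h
  rw [not_nonempty_iff] at h
  exact not_subsingleton E
    ⟨fun x y => b.repr.injective (lp.ext (funext fun i => isEmptyElim i))⟩

variable (b : HilbertBasis ι 𝕜 E) {T : E →L[𝕜] E} {c : ι → 𝕜}

theorem repr_apply_of_apply_eq_smul (hT : ∀ i, T (b i) = c i • b i) (x : E) (i : ι) :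
    b.repr (T x) i = c i * b.repr x i := by
  have hcoord : (innerSL 𝕜 (b i)).comp T = c i • innerSL 𝕜 (b i) := by
    refine ContinuousLinearMap.ext_on
      (Submodule.dense_iff_topologicalClosure_eq_top.2 b.dense_span) ?_
    rintro _ ⟨j, rfl⟩
    rcases eq_or_ne i j with rfl | hij
    · simp [hT]
    · simp [hT, b.orthonormal.inner_eq_zero hij]
  simpa [b.repr_apply_apply] using congrArg (· x) hcoord

theorem norm_le_opNorm_of_apply_eq_smul (hT : ∀ i, T (b i) = c i • b i) (i : ι) :
    ‖c i‖ ≤ ‖T‖ := by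
  simpa [hT, norm_smul, b.orthonormal.1 i] using T.le_opNorm (b i)

theorem opNorm_le_of_apply_eq_smul (hT : ∀ i, T (b i) = c i • b i) {C : ℝ} (hC : 0 ≤ C)
    (hc : ∀ i, ‖c i‖ ≤ C) : ‖T‖ ≤ C := by
  refine T.opNorm_le_bound hC fun x => ?_
  calc ‖T x‖ = ‖b.repr (T x)‖ := (b.repr.norm_map _).symm
    _ ≤ ‖(C : 𝕜) • b.repr x‖ := lp.norm_mono two_ne_zero fun i => by
        rw [b.repr_apply_of_apply_eq_smul hT, lp.coeFn_smul, Pi.smul_apply, smul_eq_mul,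
          norm_mul, norm_mul, RCLike.norm_ofReal, abs_of_nonneg hC]
        gcongr
        exact hc i
    _ = C * ‖x‖ := by
        rw [lp.norm_const_smul two_ne_zero, RCLike.norm_ofReal, abs_of_nonneg hC, b.repr.norm_map]

end HilbertBasis

theorem stmt_8_general
    {X : Type*} [NormedAddCommGroup X] [InnerProductSpace ℝ X] [CompleteSpace X]
    [Nontrivial X]
    {ι : Type*} (e : HilbertBasis ι ℝ X) (q : ι → ℝ) (Q : X →L[ℝ] X)
    (hq : ∀ i, 0 < q i)
    (hdiag : ∀ i, Q (e i) = q i • e i)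
    {α : ℝ} (hα : α ∈ Set.Ico (0 : ℝ) (1/2))
    (S : ℝ → X →L[ℝ] X)
    (hSdiag : ∀ t > (0 : ℝ), ∀ i,
      S t (e i) = Real.exp (-(t/2) * (q i) ^ (2*α - 1)) • e i)
    {t : ℝ} (ht : 0 < t) :
    ‖S t‖ ≤ Real.exp (-(t/2) * ‖Q‖ ^ (2*α - 1)) ∧
    Real.exp (-(t/2) * ‖Q‖ ^ (2*α - 1)) < 1 ∧
    IsUnit ((1 : X →L[ℝ] X) - S t) := by
  have hexp_neg : 2 * α - 1 < 0 := by linarith [hα.2]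
  have hq_le (i : ι) : q i ≤ ‖Q‖ := by
    simpa [abs_of_pos (hq i)] using e.norm_le_opNorm_of_apply_eq_smul hdiag i
  obtain ⟨i₀⟩ := e.nonempty_index
  have hQ_pos : 0 < ‖Q‖ := (hq i₀).trans_le (hq_le i₀)
  have hentry (i : ι) :
      ‖Real.exp (-(t/2) * q i ^ (2*α - 1))‖ ≤ Real.exp (-(t/2) * ‖Q‖ ^ (2*α - 1)) := by
    rw [Real.norm_of_nonneg (Real.exp_nonneg _), Real.exp_le_exp, neg_mul, neg_mul, neg_le_neg_iff]
    exact mul_le_mul_of_nonneg_left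
      (Real.rpow_le_rpow_of_nonpos (hq i) (hq_le i) hexp_neg.le) (half_pos ht).le
  have hnorm := e.opNorm_le_of_apply_eq_smul (hSdiag t ht) (Real.exp_nonneg _) hentry
  have hlt_one : Real.exp (-(t/2) * ‖Q‖ ^ (2*α - 1)) < 1 := by
    rw [Real.exp_lt_one_iff, neg_mul, neg_lt_zero]
    exact mul_pos (half_pos ht) (Real.rpow_pos_of_pos hQ_pos _)
  exact ⟨hnorm, hlt_one, (Units.oneSub (S t) (hnorm.trans_lt hlt_one)).isUnit⟩

theorem stmt_8
    {X : Type*} [NormedAddCommGroup X] [InnerProductSpace ℝ X] [CompleteSpace X]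
    [TopologicalSpace.SeparableSpace X] [Nontrivial X]
    {ι : Type*} (e : HilbertBasis ι ℝ X) (q : ι → ℝ) (Q : X →L[ℝ] X)
    (hq : ∀ i, 0 < q i)
    (hdiag : ∀ i, Q (e i) = q i • e i)
    (hsa : IsSelfAdjoint Q)
    (hpos : ∀ x : X, x ≠ 0 → 0 < ⟪Q x, x⟫)
    (hcomp : IsCompactOperator Q)
    (htrace : Summable fun i => ⟪Q (e i), e i⟫)
    {α : ℝ} (hα : α ∈ Set.Ico (0 : ℝ) (1/2))
    (S : ℝ → X →L[ℝ] X)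
    (hS0 : S 0 = ContinuousLinearMap.id ℝ X)
    (hSdiag : ∀ t > (0 : ℝ), ∀ i,
      S t (e i) = Real.exp (-(t/2) * (q i) ^ (2*α - 1)) • e i)
    {t : ℝ} (ht : 0 < t) :
    ‖S t‖ ≤ Real.exp (-(t/2) * ‖Q‖ ^ (2*α - 1)) ∧
    Real.exp (-(t/2) * ‖Q‖ ^ (2*α - 1)) < 1 ∧
    IsUnit ((1 : X →L[ℝ] X) - S t) :=
  stmt_8_general e q Q hq hdiag hα S hSdiag ht
end

section
/- Let α ∈ [0,1/2), t ≥ 0 and x ∈ X. Then the function s ↦ e^{(2s)A}(Q^{2α}x) is Bochner integrable on [0,t] and ∫₀^t e^{(2s)A}(Q^{2α}x) ds = Qx − Q(e^{(2t)A}x). In other words, the covariance operator Q_t x := ∫₀^t e^{(2s)A}Q^{2α}x ds equals Q(Id − e^{(2t)A})x. -/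
/-!
In the basis `e` all operators involved are diagonal: with `r i = q i ^ (2α - 1) ≥ 0`,
`S (2s)` acts on `e i` by `exp (-s r i)` for every `s ≥ 0` (at `s = 0` because `S 0 = id`), and
`Q^{2α}` by `q i ^ (2α) = q i * r i`. Such a family has operator norm at most `1` and, because
`u e^{-u} ≤ e^{-1}`, is Lipschitz in operator norm on every `[m, ∞)` with `m > 0`; hence
`s ↦ S (2s) y` is continuous and bounded on `(0, t]`, so integrable. The integral is then computed
coordinatewise from `r ∫₀ᵗ e^{-s r} ds = 1 - e^{-t r}`, which needs no case split at `r = 0`.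
-/

open scoped RealInnerProductSpace
open MeasureTheory Real Set

namespace HilbertBasis

variable {ι X : Type*} [NormedAddCommGroup X] [InnerProductSpace ℝ X] (e : HilbertBasis ι ℝ X)

theorem eq_of_forall_inner_eq {u v : X} (h : ∀ i, ⟪e i, u⟫ = ⟪e i, v⟫) : u = v :=
  e.repr.injective <| lp.ext <| funext fun i => by simp only [e.repr_apply_apply, h]

theorem norm_le_of_abs_inner_le {u v : X} (h : ∀ i, |⟪e i, u⟫| ≤ |⟪e i, v⟫|) : ‖u‖ ≤ ‖v‖ := by
  rw [← e.repr.norm_map u, ← e.repr.norm_map v]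
  exact lp.norm_mono two_ne_zero fun i => by
    simpa only [e.repr_apply_apply, Real.norm_eq_abs] using h i

variable {e} {T : X →L[ℝ] X} {E : ι → ℝ}

theorem inner_apply_of_apply_eq_smul (hT : ∀ i, T (e i) = E i • e i) (j : ι) (z : X) :
    ⟪e j, T z⟫ = E j * ⟪e j, z⟫ := by
  classical
  have : (innerSL ℝ (e j)).comp T = E j • innerSL ℝ (e j) := by
    refine ContinuousLinearMap.ext_on
      (Submodule.dense_iff_topologicalClosure_eq_top.2 e.dense_span) ?_
    rintro _ ⟨i, rfl⟩
    simp only [ContinuousLinearMap.comp_apply, FunLike.coe_smul, Pi.smul_apply,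
      innerSL_apply_apply, hT, inner_smul_right, orthonormal_iff_ite.mp e.orthonormal, smul_eq_mul]
    split_ifs with h <;> simp [h]
  simpa using congr($this z)

theorem opNorm_le_of_apply_eq_smul_s9 {M : ℝ} (hM : 0 ≤ M) (hT : ∀ i, T (e i) = E i • e i)
    (hE : ∀ i, |E i| ≤ M) : ‖T‖ ≤ M := by
  refine T.opNorm_le_bound hM fun z => ?_
  rw [← abs_of_nonneg hM, ← Real.norm_eq_abs, ← norm_smul]
  refine e.norm_le_of_abs_inner_le fun j => ?_
  rw [inner_apply_of_apply_eq_smul hT, inner_smul_right, abs_mul, abs_mul, abs_of_nonneg hM]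
  gcongr
  exact hE j

end HilbertBasis

theorem mul_integral_exp_neg_mul (L t : ℝ) :
    L * ∫ s in (0 : ℝ)..t, exp (-(s * L)) = 1 - exp (-(t * L)) := by
  have hderiv (s : ℝ) : HasDerivAt (fun u => -exp (-(u * L))) (L * exp (-(s * L))) s :=
    ((hasDerivAt_mul_const L).fun_neg.exp.fun_neg).congr_deriv (by ring)
  rw [← intervalIntegral.integral_const_mul,
    intervalIntegral.integral_eq_sub_of_hasDerivAt (fun s _ => hderiv s)
    (Continuous.intervalIntegrable (by fun_prop) _ _)]
  simp only [zero_mul, neg_zero, exp_zero, sub_neg_eq_add]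
  ring

theorem lipschitzOnWith_exp_neg_mul {L m : ℝ} (hL : 0 ≤ L) (hm : 0 < m) :
    LipschitzOnWith (exp (-1) / m).toNNReal (fun s => exp (-(s * L))) (Ici m) := by
  refine (convex_Ici m).lipschitzOnWith_of_nnnorm_hasDerivWithin_le
    (fun s _ => ((hasDerivAt_mul_const L).neg.exp).hasDerivWithinAt) fun s hs => ?_
  rw [← NNReal.coe_le_coe, coe_nnnorm, Real.coe_toNNReal _ (by positivity), le_div_iff₀ hm]
  calc ‖exp (-(s * L)) * -L‖ * m = (m * L) * exp (-(s * L)) := by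
        rw [norm_mul, norm_neg, Real.norm_of_nonneg (exp_pos _).le, Real.norm_of_nonneg hL]; ring
    _ ≤ (m * L) * exp (-(m * L)) := by gcongr; exact hs
    _ ≤ exp (-1) := mul_exp_neg_le_exp_neg_one _

section DiagonalSemigroup

variable {ι X : Type*} [NormedAddCommGroup X] [InnerProductSpace ℝ X] {e : HilbertBasis ι ℝ X}
  {r : ι → ℝ} {T : ℝ → X →L[ℝ] X}

theorem norm_le_one_of_apply_eq_exp_smul (hr : ∀ i, 0 ≤ r i)
    (hT : ∀ s, 0 ≤ s → ∀ i, T s (e i) = exp (-(s * r i)) • e i) {s : ℝ} (hs : 0 ≤ s) :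
    ‖T s‖ ≤ 1 :=
  HilbertBasis.opNorm_le_of_apply_eq_smul_s9 zero_le_one (hT s hs) fun i => by
    rw [abs_of_pos (exp_pos _), exp_le_one_iff, neg_nonpos]
    exact mul_nonneg hs (hr i)

theorem lipschitzOnWith_of_apply_eq_exp_smul (hr : ∀ i, 0 ≤ r i)
    (hT : ∀ s, 0 ≤ s → ∀ i, T s (e i) = exp (-(s * r i)) • e i) {m : ℝ} (hm : 0 < m) :
    LipschitzOnWith (exp (-1) / m).toNNReal T (Ici m) := by
  refine LipschitzOnWith.of_dist_le_mul fun a ha b hb => ?_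
  have hab : ∀ i, (T a - T b) (e i) = (exp (-(a * r i)) - exp (-(b * r i))) • e i := fun i => by
    rw [sub_apply, hT a (hm.le.trans ha), hT b (hm.le.trans hb), sub_smul]
  rw [dist_eq_norm]
  refine HilbertBasis.opNorm_le_of_apply_eq_smul_s9 (by positivity) hab fun i => ?_
  simpa only [Real.dist_eq] using (lipschitzOnWith_exp_neg_mul (hr i) hm).dist_le_mul a ha b hb

theorem continuousOn_Ioi_of_apply_eq_exp_smul (hr : ∀ i, 0 ≤ r i)
    (hT : ∀ s, 0 ≤ s → ∀ i, T s (e i) = exp (-(s * r i)) • e i) : ContinuousOn T (Ioi 0) :=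
  fun _ hs => ((lipschitzOnWith_of_apply_eq_exp_smul hr hT (half_pos hs)).continuousOn
    |>.continuousAt (Ici_mem_nhds (half_lt_self hs))).continuousWithinAt

theorem integrableOn_Icc_of_apply_eq_exp_smul (hr : ∀ i, 0 ≤ r i)
    (hT : ∀ s, 0 ≤ s → ∀ i, T s (e i) = exp (-(s * r i)) • e i) (t : ℝ) (y : X) :
    IntegrableOn (fun s => T s y) (Icc 0 t) := by
  rw [integrableOn_Icc_iff_integrableOn_Ioc]
  have hcont : ContinuousOn (fun s => T s y) (Ioc 0 t) :=
    ((continuousOn_Ioi_of_apply_eq_exp_smul hr hT).mono Ioc_subset_Ioi_self).clm_apply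
      continuousOn_const
  refine Integrable.mono' (integrableOn_const (C := ‖y‖) measure_Ioc_lt_top.ne)
    (hcont.aestronglyMeasurable measurableSet_Ioc) ?_
  refine (ae_restrict_iff' measurableSet_Ioc).2 (.of_forall fun s hs => ?_)
  calc ‖T s y‖ ≤ ‖T s‖ * ‖y‖ := (T s).le_opNorm y
    _ ≤ 1 * ‖y‖ := by gcongr; exact norm_le_one_of_apply_eq_exp_smul hr hT hs.1.le
    _ = ‖y‖ := one_mul _

theorem inner_setIntegral_Icc_of_apply_eq_exp_smul [CompleteSpace X] (hr : ∀ i, 0 ≤ r i)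
    (hT : ∀ s, 0 ≤ s → ∀ i, T s (e i) = exp (-(s * r i)) • e i) {t : ℝ} (ht : 0 ≤ t) (y : X)
    (j : ι) :
    ⟪e j, ∫ s in Icc 0 t, T s y⟫ = (∫ s in (0 : ℝ)..t, exp (-(s * r j))) * ⟪e j, y⟫ := by
  rw [← integral_inner (integrableOn_Icc_of_apply_eq_exp_smul hr hT t y),
    setIntegral_congr_fun measurableSet_Icc fun s hs =>
      HilbertBasis.inner_apply_of_apply_eq_smul (hT s hs.1) j y,
    integral_Icc_eq_integral_Ioc, ← intervalIntegral.integral_of_le ht,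
    intervalIntegral.integral_mul_const]

end DiagonalSemigroup

theorem stmt_9_general
    {X : Type*} [NormedAddCommGroup X] [InnerProductSpace ℝ X] [CompleteSpace X]
    {ι : Type*} (e : HilbertBasis ι ℝ X) (q : ι → ℝ) (Q : X →L[ℝ] X)
    (hq : ∀ i, 0 < q i)
    (hdiag : ∀ i, Q (e i) = q i • e i)
    {α : ℝ}
    (Q2α : X →L[ℝ] X) (hQ2α : ∀ i, Q2α (e i) = (q i) ^ (2*α) • e i)
    (S : ℝ → X →L[ℝ] X)
    (hS0 : S 0 = ContinuousLinearMap.id ℝ X)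
    (hSdiag : ∀ t > (0 : ℝ), ∀ i,
      S t (e i) = Real.exp (-(t/2) * (q i) ^ (2*α - 1)) • e i)
    {t : ℝ} (ht : 0 ≤ t) (x : X) :
    IntegrableOn (fun s => S (2*s) (Q2α x)) (Set.Icc 0 t) volume ∧
    ∫ s in Set.Icc (0 : ℝ) t, S (2*s) (Q2α x) = Q x - Q (S (2*t) x) := by
  set r : ι → ℝ := fun i => q i ^ (2 * α - 1)
  have hr (i : ι) : 0 ≤ r i := rpow_nonneg (hq i).le _
  have hQ2α_eq (i : ι) : q i ^ (2 * α) = q i * r i := by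
    rw [show 2 * α = 1 + (2 * α - 1) by ring, rpow_add (hq i), rpow_one]
  have hT (s : ℝ) (hs : 0 ≤ s) (i : ι) : S (2 * s) (e i) = exp (-(s * r i)) • e i := by
    rcases hs.eq_or_lt with rfl | hs
    · simp [hS0]
    · rw [hSdiag _ (by positivity), mul_div_cancel_left₀ s two_ne_zero, neg_mul]
  refine ⟨integrableOn_Icc_of_apply_eq_exp_smul hr hT t _, e.eq_of_forall_inner_eq fun j => ?_⟩
  simp only [inner_setIntegral_Icc_of_apply_eq_exp_smul hr hT ht, inner_sub_right,
    HilbertBasis.inner_apply_of_apply_eq_smul hQ2α, HilbertBasis.inner_apply_of_apply_eq_smul hdiag,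
    HilbertBasis.inner_apply_of_apply_eq_smul (hT t ht), hQ2α_eq]
  linear_combination (q j * ⟪e j, x⟫) * mul_integral_exp_neg_mul (r j) t

theorem stmt_9
    {X : Type*} [NormedAddCommGroup X] [InnerProductSpace ℝ X] [CompleteSpace X]
    [TopologicalSpace.SeparableSpace X]
    {ι : Type*} (e : HilbertBasis ι ℝ X) (q : ι → ℝ) (Q : X →L[ℝ] X)
    (hq : ∀ i, 0 < q i)
    (hdiag : ∀ i, Q (e i) = q i • e i)
    (hsa : IsSelfAdjoint Q)
    (hpos : ∀ x : X, x ≠ 0 → 0 < ⟪Q x, x⟫)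
    (hcomp : IsCompactOperator Q)
    (htrace : Summable fun i => ⟪Q (e i), e i⟫)
    {α : ℝ} (hα : α ∈ Set.Ico (0 : ℝ) (1/2))
    (Q2α : X →L[ℝ] X) (hQ2α : ∀ i, Q2α (e i) = (q i) ^ (2*α) • e i)
    (S : ℝ → X →L[ℝ] X)
    (hS0 : S 0 = ContinuousLinearMap.id ℝ X)
    (hSdiag : ∀ t > (0 : ℝ), ∀ i,
      S t (e i) = Real.exp (-(t/2) * (q i) ^ (2*α - 1)) • e i)
    {t : ℝ} (ht : 0 ≤ t) (x : X) :
    IntegrableOn (fun s => S (2*s) (Q2α x)) (Set.Icc 0 t) volume ∧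
    ∫ s in Set.Icc (0 : ℝ) t, S (2*s) (Q2α x) = Q x - Q (S (2*t) x) :=
  stmt_9_general e q Q hq hdiag Q2α hQ2α S hS0 hSdiag ht x
end

section
/- Let α ∈ [0,1/2) and t > 0, and assume X ≠ {0}. Let Q_t^{1/2} denote the continuous functional calculus of Q applied to the continuous function λ ↦ √(λ·(1 − f_{2t}(λ))), i.e. the square root of the positive operator Q_t = Q ∘ (Id − e^{(2t)A}). Then the ranges coincide: Q_t^{1/2}(X) = Q^{1/2}(X); in particular e^{tA}(X) ⊆ Q_t^{1/2}(X). -/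
/-!
Context: as before; `Q^{1/2}` is the unique bounded operator `Qhalf` with
`Qhalf (e i) = (q i)^(1/2) • e i`; for `α ∈ [0,1/2)`, `e^{tA}` is the unique family `S`
with `S 0 = Id` and `S t (e i) = exp(−(t/2)(q i)^{2α−1}) • e i` for `t > 0`.  The
operator `Q_t^{1/2}`, the continuous functional calculus of `Q` applied to
`λ ↦ √(λ(1 − f_{2t}(λ)))` (the square root of `Q_t = Q ∘ (Id − e^{(2t)A})`), is the
unique bounded operator `Qth` with
`Qth (e i) = √(q i · (1 − exp(−((2t)/2)(q i)^{2α−1}))) • e i` (note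
`f_{2t}(q i) = exp(−((2t)/2)(q i)^{2α−1})` since `q i > 0`).

STATEMENT 10: assume `X ≠ {0}`; for `α ∈ [0,1/2)` and `t > 0` the ranges coincide:
`Q_t^{1/2}(X) = Q^{1/2}(X)`; in particular `e^{tA}(X) ⊆ Q_t^{1/2}(X)`.
-/

open scoped RealInnerProductSpace ENNReal

noncomputable section

lemma repr_diag {X : Type*} [NormedAddCommGroup X] [InnerProductSpace ℝ X] [CompleteSpace X]
    {ι : Type*} (e : HilbertBasis ι ℝ X) (v : ι → ℝ) (V : X →L[ℝ] X)
    (hV : ∀ i, V (e i) = v i • e i) (x : X) (i : ι) :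
    e.repr (V x) i = v i * e.repr x i := by
  classical
  have h1 : HasSum (fun j => e.repr x j • V (e j)) (V x) := by
    simpa only [map_smul] using (e.hasSum_repr x).mapL V
  have h2 : HasSum (fun j => (innerSL ℝ (e i)) (e.repr x j • V (e j))) ⟪e i, V x⟫ :=
    h1.mapL _
  have h3 : (fun j => (innerSL ℝ (e i)) (e.repr x j • V (e j)))
      = fun j => if j = i then v i * e.repr x i else 0 := by
    funext j
    rw [hV j, innerSL_apply_apply, real_inner_smul_right, real_inner_smul_right,
      orthonormal_iff_ite.mp e.orthonormal]
    by_cases hji : i = j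
    · subst hji; simp [mul_comm]
    · simp [hji, Ne.symm hji]
  rw [h3] at h2
  have h4 : HasSum (fun j => if j = i then v i * e.repr x i else 0)
      (v i * e.repr x i) := hasSum_ite_eq i _
  rw [e.repr_apply_apply]
  exact h2.unique h4

lemma diag_range_subset {X : Type*} [NormedAddCommGroup X] [InnerProductSpace ℝ X]
    [CompleteSpace X] {ι : Type*} (e : HilbertBasis ι ℝ X) (a b : ι → ℝ)
    (T U : X →L[ℝ] X) (hT : ∀ i, T (e i) = a i • e i) (hU : ∀ i, U (e i) = b i • e i)
    (C : ℝ) (hC : 0 ≤ C) (h : ∀ i, |a i| ≤ C * |b i|) :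
    Set.range ⇑T ⊆ Set.range ⇑U := by
  rintro _ ⟨x, rfl⟩
  set c : ι → ℝ := fun i => (a i / b i) * e.repr x i with hcdef
  have hratio : ∀ i, |a i / b i| ≤ C := by
    intro i
    by_cases hb : b i = 0
    · have : |a i| ≤ 0 := by simpa [hb] using h i
      have ha : a i = 0 := abs_eq_zero.mp (le_antisymm this (abs_nonneg _))
      simp [ha, hb, hC]
    · rw [abs_div, div_le_iff₀ (abs_pos.mpr hb)]
      exact h i
  have hci : ∀ i, ‖c i‖ ≤ C * ‖e.repr x i‖ := by
    intro i
    rw [hcdef]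
    simp only [Real.norm_eq_abs, abs_mul]
    exact mul_le_mul_of_nonneg_right (hratio i) (abs_nonneg _)
  have hmem : Memℓp c 2 := by
    apply memℓp_gen
    have h0 : Summable (fun i => ‖e.repr x i‖ ^ (2 : ℝ≥0∞).toReal) := by
      have := lp.memℓp (e.repr x)
      rwa [memℓp_gen_iff (by norm_num)] at this
    apply Summable.of_nonneg_of_le (fun i => by positivity)
      ?_ (h0.mul_left (C ^ (2 : ℝ≥0∞).toReal))
    intro i
    rw [← Real.mul_rpow hC (norm_nonneg _)]
    exact Real.rpow_le_rpow (norm_nonneg _) (hci i) ENNReal.toReal_nonneg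
  refine ⟨e.repr.symm ⟨c, hmem⟩, ?_⟩
  apply e.repr.injective
  have hz : e.repr (e.repr.symm (⟨c, hmem⟩ : lp (fun _ : ι => ℝ) 2)) = ⟨c, hmem⟩ :=
    e.repr.apply_symm_apply _
  ext i
  rw [repr_diag e b U hU, repr_diag e a T hT, hz]
  show b i * c i = a i * e.repr x i
  by_cases hb : b i = 0
  · have : |a i| ≤ 0 := by simpa [hb] using h i
    have ha : a i = 0 := abs_eq_zero.mp (le_antisymm this (abs_nonneg _))
    simp [ha, hb]
  · rw [hcdef]
    field_simp

lemma pow_div_le_exp (x : ℝ) (hx : 0 ≤ x) (n : ℕ) (hn : n ≠ 0) :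
    (x / n) ^ n ≤ Real.exp x := by
  have hn' : (n : ℝ) ≠ 0 := Nat.cast_ne_zero.mpr hn
  have h1 : x / n ≤ Real.exp (x / n) := by
    have := Real.add_one_le_exp (x / n); linarith
  calc (x / n) ^ n ≤ (Real.exp (x / n)) ^ n := pow_le_pow_left₀ (by positivity) h1 n
    _ = Real.exp (n * (x / n)) := (Real.exp_nat_mul _ n).symm
    _ = Real.exp x := by rw [mul_div_cancel₀ _ hn']

lemma exp_le_const_rpow {q M t β : ℝ} (hq : 0 < q) (hM : q ≤ M) (ht : 0 < t)
    (n : ℕ) (hn : n ≠ 0) (hnβ : 1/2 ≤ (n:ℝ) * β) :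
    Real.exp (-(t/2) * q ^ (-β)) ≤
      ((2*n/t)^n * M ^ ((n:ℝ)*β - 1/2)) * q ^ ((1:ℝ)/2) := by
  have hM0 : 0 < M := lt_of_lt_of_le hq hM
  set x : ℝ := (t/2) * q ^ (-β) with hxdef
  have hx : 0 < x := by positivity
  have h1 : (x / n) ^ n ≤ Real.exp x := pow_div_le_exp x hx.le n hn
  have hxn : (0:ℝ) < (x / n) ^ n := by positivity
  have h2 : Real.exp (-x) ≤ ((x / n) ^ n)⁻¹ := by
    rw [Real.exp_neg]
    exact inv_anti₀ hxn h1
  have h3 : ((x / n) ^ n)⁻¹ = (2*n/t)^n * q ^ ((n:ℝ)*β) := by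
    rw [← inv_pow]
    have : (x / n)⁻¹ = (2*n/t) * q ^ β := by
      rw [hxdef, Real.rpow_neg hq.le]
      field_simp
    rw [this, mul_pow, ← Real.rpow_natCast (q ^ β) n, ← Real.rpow_mul hq.le]
    ring_nf
  have h4 : q ^ ((n:ℝ)*β) = q ^ ((n:ℝ)*β - 1/2) * q ^ ((1:ℝ)/2) := by
    rw [← Real.rpow_add hq]; ring_nf
  have h5 : q ^ ((n:ℝ)*β - 1/2) ≤ M ^ ((n:ℝ)*β - 1/2) :=
    Real.rpow_le_rpow hq.le hM (by linarith)
  calc Real.exp (-(t/2) * q ^ (-β)) = Real.exp (-x) := by rw [hxdef]; ring_nf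
    _ ≤ (2*n/t)^n * (q ^ ((n:ℝ)*β - 1/2) * q ^ ((1:ℝ)/2)) := by
        rw [← h4, ← h3]; exact h2
    _ ≤ ((2*n/t)^n * M ^ ((n:ℝ)*β - 1/2)) * q ^ ((1:ℝ)/2) := by
        rw [mul_assoc]
        have hq2 : (0:ℝ) ≤ q ^ ((1:ℝ)/2) := Real.rpow_nonneg hq.le _
        nlinarith [pow_nonneg (by positivity : (0:ℝ) ≤ 2*n/t) n,
          mul_le_mul_of_nonneg_right h5 hq2]

theorem stmt_10
    {X : Type*} [NormedAddCommGroup X] [InnerProductSpace ℝ X] [CompleteSpace X]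
    [TopologicalSpace.SeparableSpace X] [Nontrivial X]
    {ι : Type*} (e : HilbertBasis ι ℝ X) (q : ι → ℝ) (Q : X →L[ℝ] X)
    (hq : ∀ i, 0 < q i)
    (hdiag : ∀ i, Q (e i) = q i • e i)
    (hsa : IsSelfAdjoint Q)
    (hpos : ∀ x : X, x ≠ 0 → 0 < ⟪Q x, x⟫)
    (hcomp : IsCompactOperator Q)
    (htrace : Summable fun i => ⟪Q (e i), e i⟫)
    {α : ℝ} (hα : α ∈ Set.Ico (0 : ℝ) (1/2))
    (S : ℝ → X →L[ℝ] X)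
    (hS0 : S 0 = ContinuousLinearMap.id ℝ X)
    (hSdiag : ∀ s > (0 : ℝ), ∀ i,
      S s (e i) = Real.exp (-(s/2) * (q i) ^ (2*α - 1)) • e i)
    {t : ℝ} (ht : 0 < t)
    (Qhalf : X →L[ℝ] X) (hQhalf : ∀ i, Qhalf (e i) = (q i) ^ ((1:ℝ)/2) • e i)
    (Qth : X →L[ℝ] X)
    (hQth : ∀ i, Qth (e i) =
      Real.sqrt (q i * (1 - Real.exp (-((2*t)/2) * (q i) ^ (2*α - 1)))) • e i) :
    Set.range ⇑Qth = Set.range ⇑Qhalf ∧ Set.range ⇑(S t) ⊆ Set.range ⇑Qth := by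
  -- basic setup
  set β : ℝ := 1 - 2*α with hβdef
  have hβ : 0 < β := by
    have := hα.2; simp only [hβdef]; linarith
  have h2a : 2*α - 1 = -β := by rw [hβdef]; ring
  -- the eigenvalues are summable and bounded by M
  have hip : ∀ i, ⟪Q (e i), e i⟫ = q i := by
    intro i
    rw [hdiag i, real_inner_smul_left, real_inner_self_eq_norm_sq, e.orthonormal.1 i]
    norm_num
  have hqsum : Summable q := by
    have : (fun i => ⟪Q (e i), e i⟫) = q := funext hip
    rwa [this] at htrace
  set M : ℝ := ∑' i, q i with hMdef
  have hqM : ∀ i, q i ≤ M := fun i => Summable.le_tsum hqsum i (fun j _ => (hq j).le)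
  have hι : Nonempty ι := by
    by_contra hcon
    rw [not_nonempty_iff] at hcon
    obtain ⟨x, y, hxy⟩ := exists_pair_ne X
    have key : ∀ z : X, z = 0 := by
      intro z
      have h1 : HasSum (fun i : ι => e.repr z i • e i) z := e.hasSum_repr z
      have h2 : HasSum (fun i : ι => e.repr z i • e i) 0 := by
        have he : (fun i : ι => e.repr z i • e i) = fun _ => (0:X) :=
          funext fun i => isEmptyElim i
        rw [he]; exact hasSum_zero
      exact h1.unique h2
    exact hxy ((key x).trans (key y).symm)
  have hM : 0 < M := lt_of_lt_of_le (hq (Classical.arbitrary ι)) (hqM _)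
  -- uniform lower bound on 1 - exp term
  set r : ℝ := Real.exp (-t * M ^ (-β)) with hrdef
  have hr1 : r < 1 := by
    rw [hrdef, Real.exp_lt_one_iff]
    have : (0:ℝ) < M ^ (-β) := Real.rpow_pos_of_pos hM _
    nlinarith
  set c0 : ℝ := 1 - r with hc0def
  have hc0 : 0 < c0 := by rw [hc0def]; linarith
  -- notation for eigenvalue functions
  set A : ι → ℝ := fun i =>
    Real.sqrt (q i * (1 - Real.exp (-((2*t)/2) * (q i) ^ (2*α - 1)))) with hAdef
  set B : ι → ℝ := fun i => (q i) ^ ((1:ℝ)/2) with hBdef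
  have hexp_eq : ∀ i, -((2*t)/2) * (q i) ^ (2*α - 1) = -t * (q i) ^ (-β) := by
    intro i; rw [h2a]; ring
  have hεpos : ∀ i, 0 < Real.exp (-((2*t)/2) * (q i) ^ (2*α - 1)) :=
    fun i => Real.exp_pos _
  have hεr : ∀ i, Real.exp (-((2*t)/2) * (q i) ^ (2*α - 1)) ≤ r := by
    intro i
    rw [hexp_eq i, hrdef]
    apply Real.exp_le_exp.mpr
    have h5 : M ^ (-β) ≤ (q i) ^ (-β) :=
      Real.rpow_le_rpow_of_nonpos (hq i) (hqM i) (by linarith)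
    nlinarith
  have hB0 : ∀ i, 0 < B i := fun i => Real.rpow_pos_of_pos (hq i) _
  have hBsqrt : ∀ i, B i = Real.sqrt (q i) := fun i => (Real.sqrt_eq_rpow _).symm
  -- first inclusion: range Qth ⊆ range Qhalf
  have hsub1 : Set.range ⇑Qth ⊆ Set.range ⇑Qhalf := by
    apply diag_range_subset e A B Qth Qhalf hQth hQhalf 1 zero_le_one
    intro i
    rw [abs_of_nonneg (Real.sqrt_nonneg _), abs_of_pos (hB0 i), one_mul, hBsqrt i]
    apply Real.sqrt_le_sqrt
    nlinarith [hεpos i, hq i]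
  -- second inclusion: range Qhalf ⊆ range Qth
  have hsub2 : Set.range ⇑Qhalf ⊆ Set.range ⇑Qth := by
    apply diag_range_subset e B A Qhalf Qth hQhalf hQth (Real.sqrt c0)⁻¹
      (by positivity)
    intro i
    have hs : 0 < Real.sqrt c0 := Real.sqrt_pos.mpr hc0
    rw [abs_of_pos (hB0 i), abs_of_nonneg (Real.sqrt_nonneg _), hBsqrt i,
      inv_mul_eq_div, le_div_iff₀ hs]
    rw [← Real.sqrt_mul (hq i).le]
    apply Real.sqrt_le_sqrt
    have : c0 ≤ 1 - Real.exp (-((2*t)/2) * (q i) ^ (2*α - 1)) := by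
      rw [hc0def]; linarith [hεr i]
    nlinarith [hq i]
  -- third inclusion: range (S t) ⊆ range Qhalf
  obtain ⟨n, hnge⟩ := exists_nat_ge (1/(2*β))
  have hn0 : n ≠ 0 := by
    rintro rfl
    simp only [Nat.cast_zero] at hnge
    have : (0:ℝ) < 1/(2*β) := by positivity
    linarith
  have hnβ : 1/2 ≤ (n:ℝ) * β := by
    have h2β : (0:ℝ) < 2*β := by linarith
    have h := (div_le_iff₀ h2β).mp hnge
    nlinarith [h]
  have hsub3 : Set.range ⇑(S t) ⊆ Set.range ⇑Qhalf := by
    apply diag_range_subset e (fun i => Real.exp (-(t/2) * (q i) ^ (2*α - 1))) B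
      (S t) Qhalf (hSdiag t ht) hQhalf
      ((2*n/t)^n * M ^ ((n:ℝ)*β - 1/2)) (by positivity)
    intro i
    rw [abs_of_pos (Real.exp_pos _), abs_of_pos (hB0 i), h2a, hBdef]
    exact exp_le_const_rpow (hq i) (hqM i) ht n hn0 hnβ
  exact ⟨Set.Subset.antisymm hsub1 hsub2, hsub3.trans hsub2⟩
end
end

section
/- Let L > 0 and let g : ℝ → ℝ be monotone nondecreasing, Lipschitz with constant L, and such that g maps [0,1] into [0,1]. Let d : ℝ → ℝ be a measurable function such that for Lebesgue-almost every ξ ∈ [0,1], g has derivative d(ξ) at ξ. Then for every measurable function φ : ℝ → [0,∞] one has ∫_{[0,1]} φ(g(ξ))·d(ξ)² dξ ≤ L·∫_{[0,1]} φ(η) dη, where the integrals are Lebesgue integrals with values in [0,∞]. -/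
/-!
STATEMENT 15: let `L > 0` and `g : ℝ → ℝ` be nondecreasing, Lipschitz with constant `L`,
mapping `[0,1]` into `[0,1]`.  Let `d : ℝ → ℝ` be measurable such that for Lebesgue-a.e.
`ξ ∈ [0,1]`, `g` has derivative `d ξ` at `ξ`.  Then for every measurable
`φ : ℝ → [0,∞]`,
`∫_{[0,1]} φ(g ξ)·(d ξ)² dξ ≤ L·∫_{[0,1]} φ(η) dη`
(Lebesgue integrals with values in `[0,∞]`).
-/

open MeasureTheory Set Filter
open scoped ENNReal Topology

noncomputable section

/-- 1D version of the change of variables formula for lower Lebesgue integrals. -/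
lemma lintegral_image_eq_lintegral_abs_deriv_mul' {s : Set ℝ} {f f' : ℝ → ℝ}
    (hs : MeasurableSet s) (hf' : ∀ x ∈ s, HasDerivWithinAt f (f' x) s x)
    (hf : Set.InjOn f s) (φ : ℝ → ℝ≥0∞) :
    ∫⁻ x in f '' s, φ x = ∫⁻ x in s, ENNReal.ofReal |f' x| * φ (f x) := by
  simpa only [ContinuousLinearMap.det_toSpanSingleton] using
    MeasureTheory.lintegral_image_eq_lintegral_abs_det_fderiv_mul volume hs
      (fun x hx => (hf' x hx).hasFDerivWithinAt) hf φ

theorem stmt_15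
    {L : ℝ} (hL : 0 < L) (g d : ℝ → ℝ)
    (hmono : Monotone g)
    (hlip : ∀ a b : ℝ, |g a - g b| ≤ L * |a - b|)
    (hmaps : Set.MapsTo g (Set.Icc 0 1) (Set.Icc 0 1))
    (hd : Measurable d)
    (hderiv : ∀ᵐ ξ ∂(volume.restrict (Set.Icc (0 : ℝ) 1)), HasDerivAt g (d ξ) ξ)
    (φ : ℝ → ℝ≥0∞) (hφ : Measurable φ) :
    ∫⁻ ξ in Set.Icc (0 : ℝ) 1, φ (g ξ) * ENNReal.ofReal ((d ξ) ^ 2)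
      ≤ ENNReal.ofReal L * ∫⁻ η in Set.Icc (0 : ℝ) 1, φ η := by
  -- g is continuous (Lipschitz), hence measurable
  have hgcont : Continuous g := by
    have : LipschitzWith (Real.toNNReal L) g := by
      refine LipschitzWith.of_dist_le_mul fun a b => ?_
      rw [Real.dist_eq, Real.dist_eq, Real.coe_toNNReal L hL.le]
      exact hlip a b
    exact this.continuous
  have hgmeas : Measurable g := hgcont.measurable
  -- extract a measurable full-measure set where the derivative exists
  have hnull : volume ({ξ | ¬ HasDerivAt g (d ξ) ξ} ∩ Set.Icc (0 : ℝ) 1) = 0 := by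
    have := (MeasureTheory.ae_iff).mp hderiv
    rwa [Measure.restrict_apply' measurableSet_Icc] at this
  obtain ⟨N, hNsub, hNmeas, hN0⟩ := exists_measurable_superset_of_null hnull
  set t : Set ℝ := Set.Icc (0 : ℝ) 1 \ N with ht_def
  have ht_meas : MeasurableSet t := measurableSet_Icc.diff hNmeas
  have ht_sub : t ⊆ Set.Icc (0 : ℝ) 1 := diff_subset
  have hderiv_t : ∀ x ∈ t, HasDerivAt g (d x) x := by
    intro x hx
    by_contra h
    exact hx.2 (hNsub ⟨h, hx.1⟩)
  -- bounds on the derivative on t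
  have hslope : ∀ x ∈ t, Tendsto (slope g x) (𝓝[>] x) (𝓝 (d x)) :=
    fun x hx => (hasDerivAt_iff_tendsto_slope.mp (hderiv_t x hx)).mono_left
      (nhdsWithin_mono x fun y hy => ne_of_gt hy)
  have hd_nonneg : ∀ x ∈ t, 0 ≤ d x := by
    intro x hx
    refine ge_of_tendsto (hslope x hx) ?_
    filter_upwards [self_mem_nhdsWithin] with y hy
    have hxy : x < y := hy
    rw [slope_def_field]
    exact div_nonneg (by linarith [hmono hxy.le]) (by linarith)
  have hd_le : ∀ x ∈ t, d x ≤ L := by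
    intro x hx
    refine le_of_tendsto (hslope x hx) ?_
    filter_upwards [self_mem_nhdsWithin] with y hy
    have hxy : x < y := hy
    rw [slope_def_field]
    rw [div_le_iff₀ (by linarith)]
    calc g y - g x ≤ |g y - g x| := le_abs_self _
      _ ≤ L * |y - x| := hlip y x
      _ = L * (y - x) := by rw [abs_of_pos (by linarith)]
  -- the positive-derivative set
  set s : Set ℝ := t ∩ d ⁻¹' (Set.Ioi 0) with hs_def
  have hs_meas : MeasurableSet s := ht_meas.inter (hd measurableSet_Ioi)
  have hs_sub : s ⊆ Set.Icc (0 : ℝ) 1 := fun x hx => ht_sub hx.1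
  -- g is injective on s
  have hinj : Set.InjOn g s := by
    have key : ∀ x ∈ s, ∀ y : ℝ, x < y → g x < g y := by
      intro x hx y hxy
      have hdx : (0 : ℝ) < d x := hx.2
      have hev : ∀ᶠ z in 𝓝[>] x, 0 < slope g x z :=
        (hslope x hx.1).eventually (eventually_gt_nhds hdx)
      have hmem : ∀ᶠ z in 𝓝[>] x, z ∈ Set.Ioo x y :=
        Filter.eventually_iff.mpr (Ioo_mem_nhdsGT hxy)
      obtain ⟨z, hz1, hz2⟩ := (hev.and hmem).exists
      have hxz : x < z := hz2.1
      have hpos : 0 < (g z - g x) / (z - x) := by rwa [slope_def_field] at hz1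
      have hgz : g x < g z := by
        nlinarith [mul_pos hpos (show (0:ℝ) < z - x by linarith),
          div_mul_cancel₀ (g z - g x) (show z - x ≠ 0 by linarith)]
      exact lt_of_lt_of_le hgz (hmono hz2.2.le)
    intro x hx y hy hxy
    rcases lt_trichotomy x y with h | h | h
    · exact absurd hxy (ne_of_lt (key x hx y h))
    · exact h
    · exact absurd hxy.symm (ne_of_lt (key y hy x h))
  -- split the integral
  have hsplit := lintegral_inter_add_diff (μ := volume)
    (fun ξ => φ (g ξ) * ENNReal.ofReal ((d ξ) ^ 2)) (Set.Icc (0 : ℝ) 1) hs_meas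
  rw [Set.inter_eq_self_of_subset_right hs_sub] at hsplit
  -- the part off s vanishes
  have hzero : ∫⁻ ξ in Set.Icc (0 : ℝ) 1 \ s, φ (g ξ) * ENNReal.ofReal ((d ξ) ^ 2) = 0 := by
    rw [lintegral_eq_zero_iff'
      (show AEMeasurable (fun ξ => φ (g ξ) * ENNReal.ofReal ((d ξ) ^ 2))
          (volume.restrict (Set.Icc (0:ℝ) 1 \ s)) from
        (((hφ.comp hgmeas).mul ((hd.pow_const 2).ennreal_ofReal))).aemeasurable)]
    refine Filter.eventuallyEq_iff_exists_mem.mpr ⟨{x | d x = 0}, ?_, fun x hx => by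
      simp only [Set.mem_setOf_eq] at hx
      simp [hx]⟩
    rw [MeasureTheory.mem_ae_iff, Measure.restrict_apply' (measurableSet_Icc.diff hs_meas)]
    refine measure_mono_null (fun x hx => ?_) hN0
    have hdx : d x ≠ 0 := hx.1
    have hxIcc : x ∈ Set.Icc (0:ℝ) 1 := hx.2.1
    have hxs : x ∉ s := hx.2.2
    by_contra hxN
    have hxt : x ∈ t := ⟨hxIcc, hxN⟩
    exact hdx (le_antisymm (not_lt.mp fun h => hxs ⟨hxt, h⟩) (hd_nonneg x hxt))
  -- estimate the part on s
  have hbound : ∫⁻ ξ in s, φ (g ξ) * ENNReal.ofReal ((d ξ) ^ 2)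
      ≤ ENNReal.ofReal L * ∫⁻ ξ in s, ENNReal.ofReal |d ξ| * φ (g ξ) := by
    rw [← lintegral_const_mul (ENNReal.ofReal L)
      (show Measurable fun x => ENNReal.ofReal |d x| * φ (g x) from
        (hd.abs.ennreal_ofReal).mul (hφ.comp hgmeas))]
    refine setLIntegral_mono (measurable_const.mul
      ((hd.abs.ennreal_ofReal).mul (hφ.comp hgmeas))) fun x hx => ?_
    have h0 : 0 ≤ d x := hd_nonneg x hx.1
    have h1 : d x ≤ L := hd_le x hx.1
    rw [abs_of_nonneg h0, sq, ENNReal.ofReal_mul h0]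
    calc φ (g x) * (ENNReal.ofReal (d x) * ENNReal.ofReal (d x))
        ≤ φ (g x) * (ENNReal.ofReal L * ENNReal.ofReal (d x)) := by
          gcongr
      _ = ENNReal.ofReal L * (ENNReal.ofReal (d x) * φ (g x)) := by ring
  -- change of variables on s
  have hcov : ∫⁻ ξ in s, ENNReal.ofReal |d ξ| * φ (g ξ) = ∫⁻ η in g '' s, φ η :=
    (lintegral_image_eq_lintegral_abs_deriv_mul' hs_meas
      (fun x hx => (hderiv_t x hx.1).hasDerivWithinAt) hinj φ).symm
  have himg : ∫⁻ η in g '' s, φ η ≤ ∫⁻ η in Set.Icc (0 : ℝ) 1, φ η :=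
    lintegral_mono_set (Set.image_subset_iff.mpr fun x hx => hmaps (hs_sub hx))
  calc ∫⁻ ξ in Set.Icc (0 : ℝ) 1, φ (g ξ) * ENNReal.ofReal ((d ξ) ^ 2)
      = ∫⁻ ξ in s, φ (g ξ) * ENNReal.ofReal ((d ξ) ^ 2) := by
        rw [← hsplit, hzero, add_zero]
    _ ≤ ENNReal.ofReal L * ∫⁻ ξ in s, ENNReal.ofReal |d ξ| * φ (g ξ) := hbound
    _ = ENNReal.ofReal L * ∫⁻ η in g '' s, φ η := by rw [hcov]
    _ ≤ ENNReal.ofReal L * ∫⁻ η in Set.Icc (0 : ℝ) 1, φ η := by gcongr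
end
end
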